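/- arXiv:2405.21046 — 8 statements merged into one kernel-verified Lean document; each statement's English description precedes it below -/
import Mathlib

section
/- (Implicit Q*-approximation.) In a deterministic contextual MDP with reference policy π_ref (π_ref(a|s) > 0 for all s, a) and β > 0, for every admissible trajectory τ = (s_1,a_1,…,s_H,a_H) it holds that β·log(π*_β(τ)/π_ref(τ)) = r(τ) − V*_β(s_1). -/
open scoped BigOperators

namespace Stmt3

/-- The KL-regularized soft value function
`V_f(s) = β log ∑_a π_ref(a|s) e^{f(s,a)/β}`. -/
noncomputable def Vf {S A : Type} [Fintype A] (β : ℝ) (piref : S → A → ℝ)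
    (f : S → A → ℝ) (s : S) : ℝ :=
  β * Real.log (∑ a, piref s a * Real.exp (f s a / β))

/-- The Gibbs policy `π_f(a|s) = π_ref(a|s) e^{(f(s,a) - V_f(s))/β}`. -/
noncomputable def gibbs {S A : Type} [Fintype A] (β : ℝ) (piref : S → A → ℝ)
    (f : S → A → ℝ) (s : S) (a : A) : ℝ :=
  piref s a * Real.exp ((f s a - Vf β piref f s) / β)

/-- **Implicit `Q*`-approximation.** In a deterministic contextual MDP
(layered deterministic transitions `φ`, stochastic start state) with everywhere
positive reference policy `π_ref` and `β > 0`, the optimal KL-regularized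
policy `π*_β = π_{Q*_β}` (where `Q*_β` solves the KL-regularized Bellman
recursion) satisfies, for every admissible trajectory
`τ = (s_1,a_1,…,s_H,a_H)`:
`β log (π*_β(τ)/π_ref(τ)) = r(τ) - V*_β(s_1)`. -/
theorem implicit_Qstar_approx {S A : Type} [Fintype A] {H : ℕ} (hH : 0 < H)
    (layer : S → ℕ) (hlayer : ∀ s, layer s < H)
    (φ : S → A → S) (hφ : ∀ s a, layer s + 1 < H → layer (φ s a) = layer s + 1)
    (r : S → A → ℝ) (β : ℝ) (hβ : 0 < β)
    (piref : S → A → ℝ) (hrefpos : ∀ s a, 0 < piref s a)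
    (href1 : ∀ s, ∑ a, piref s a = 1)
    (Qstar : S → A → ℝ)
    (hQ : ∀ s a, Qstar s a =
      if layer s + 1 = H then r s a else r s a + Vf β piref Qstar (φ s a))
    (τ : Fin H → S × A)
    (hlayτ : ∀ h : Fin H, layer (τ h).1 = (h : ℕ))
    (hadm : ∀ (h : Fin H) (hlt : (h : ℕ) + 1 < H),
      (τ ⟨(h : ℕ) + 1, hlt⟩).1 = φ (τ h).1 (τ h).2) :
    β * Real.log ((∏ h, gibbs β piref Qstar (τ h).1 (τ h).2) /
        ∏ h, piref (τ h).1 (τ h).2)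
      = (∑ h, r (τ h).1 (τ h).2) - Vf β piref Qstar (τ ⟨0, hH⟩).1 := by
  set G : ℕ → ℝ := fun n => if hn : n < H then Vf β piref Qstar (τ ⟨n, hn⟩).1 else 0 with hG
  have h1 : (∏ h, gibbs β piref Qstar (τ h).1 (τ h).2) / ∏ h, piref (τ h).1 (τ h).2
      = Real.exp (∑ h, (Qstar (τ h).1 (τ h).2 - Vf β piref Qstar (τ h).1) / β) := by
    rw [← Finset.prod_div_distrib, Real.exp_sum]
    refine Finset.prod_congr rfl fun h _ => ?_
    rw [gibbs, mul_comm, mul_div_assoc, div_self (ne_of_gt (hrefpos _ _)), mul_one]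
  rw [h1, Real.log_exp, Finset.mul_sum]
  have h2 : ∀ h : Fin H, β * ((Qstar (τ h).1 (τ h).2 - Vf β piref Qstar (τ h).1) / β)
      = r (τ h).1 (τ h).2 + (G ((h : ℕ) + 1) - G (h : ℕ)) := by
    intro h
    rw [mul_div_cancel₀ _ (ne_of_gt hβ)]
    have hGh : G (h : ℕ) = Vf β piref Qstar (τ h).1 := by
      simp [hG, h.isLt]
    by_cases hend : (h : ℕ) + 1 = H
    · have hQh : Qstar (τ h).1 (τ h).2 = r (τ h).1 (τ h).2 := by
        rw [hQ]; simp [hlayτ h, hend]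
      have : G ((h : ℕ) + 1) = 0 := by simp [hG, hend]
      rw [hQh, this, hGh]; ring
    · have hlt : (h : ℕ) + 1 < H := lt_of_le_of_ne h.isLt hend
      have hQh : Qstar (τ h).1 (τ h).2
          = r (τ h).1 (τ h).2 + Vf β piref Qstar (φ (τ h).1 (τ h).2) := by
        rw [hQ]; simp [hlayτ h, hend]
      have hG1 : G ((h : ℕ) + 1) = Vf β piref Qstar (φ (τ h).1 (τ h).2) := by
        simp only [hG, dif_pos hlt]
        rw [hadm h hlt]
      rw [hQh, hG1, hGh]; ring
  rw [Finset.sum_congr rfl fun h _ => h2 h, Finset.sum_add_distrib]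
  have h3 : (∑ h : Fin H, (G ((h : ℕ) + 1) - G (h : ℕ))) = G H - G 0 := by
    rw [Fin.sum_univ_eq_sum_range (fun n => G (n + 1) - G n) H, Finset.sum_range_sub]
  have hGH : G H = 0 := by simp [hG]
  have hG0 : G 0 = Vf β piref Qstar (τ ⟨0, hH⟩).1 := by simp [hG, hH]
  rw [h3, hGH, hG0]; ring

end Stmt3
end

section
/- (Implicit Q*-approximation, general version.) In a deterministic contextual MDP with reference policy π_ref (π_ref(a|s) > 0 for all s, a) and β > 0, for every function f : S×A → ℝ and every admissible trajectory τ = (s_1,a_1,…,s_H,a_H), it holds that β·log(π_f(τ)/π_ref(τ)) = r(τ) − V_f(s_1) + ∑_{h=1}^H ( f(s_h,a_h) − (T_β f)(s_h,a_h) ). -/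
open scoped BigOperators

namespace Stmt4

/-- The KL-regularized soft value function
`V_f(s) = β log ∑_a π_ref(a|s) e^{f(s,a)/β}`. -/
noncomputable def Vf {S A : Type} [Fintype A] (β : ℝ) (piref : S → A → ℝ)
    (f : S → A → ℝ) (s : S) : ℝ :=
  β * Real.log (∑ a, piref s a * Real.exp (f s a / β))

/-- The Gibbs policy `π_f(a|s) = π_ref(a|s) e^{(f(s,a) - V_f(s))/β}`. -/
noncomputable def gibbs {S A : Type} [Fintype A] (β : ℝ) (piref : S → A → ℝ)
    (f : S → A → ℝ) (s : S) (a : A) : ℝ :=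
  piref s a * Real.exp ((f s a - Vf β piref f s) / β)

/-- The KL-regularized Bellman operator for a deterministic contextual MDP:
`(T_β f)(s,a) = r(s,a) + V_f(φ(s,a))` for non-terminal layers, and
`(T_β f)(s,a) = r(s,a)` at the last layer. -/
noncomputable def Tbeta {S A : Type} [Fintype A] (H : ℕ) (layer : S → ℕ)
    (φ : S → A → S) (r : S → A → ℝ) (β : ℝ) (piref : S → A → ℝ)
    (f : S → A → ℝ) (s : S) (a : A) : ℝ :=
  if layer s + 1 = H then r s a else r s a + Vf β piref f (φ s a)

/-- **Implicit `Q*`-approximation, general version.** In a deterministic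
contextual MDP with everywhere positive reference policy `π_ref` and `β > 0`,
for every function `f : S × A → ℝ` and every admissible trajectory
`τ = (s_1,a_1,…,s_H,a_H)`:
`β log (π_f(τ)/π_ref(τ)) = r(τ) - V_f(s_1) + ∑_{h=1}^H (f(s_h,a_h) - (T_β f)(s_h,a_h))`. -/
theorem implicit_Qstar_approx_general {S A : Type} [Fintype A] {H : ℕ} (hH : 0 < H)
    (layer : S → ℕ) (hlayer : ∀ s, layer s < H)
    (φ : S → A → S) (hφ : ∀ s a, layer s + 1 < H → layer (φ s a) = layer s + 1)
    (r : S → A → ℝ) (β : ℝ) (hβ : 0 < β)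
    (piref : S → A → ℝ) (hrefpos : ∀ s a, 0 < piref s a)
    (href1 : ∀ s, ∑ a, piref s a = 1)
    (f : S → A → ℝ)
    (τ : Fin H → S × A)
    (hlayτ : ∀ h : Fin H, layer (τ h).1 = (h : ℕ))
    (hadm : ∀ (h : Fin H) (hlt : (h : ℕ) + 1 < H),
      (τ ⟨(h : ℕ) + 1, hlt⟩).1 = φ (τ h).1 (τ h).2) :
    β * Real.log ((∏ h, gibbs β piref f (τ h).1 (τ h).2) /
        ∏ h, piref (τ h).1 (τ h).2)
      = (∑ h, r (τ h).1 (τ h).2) - Vf β piref f (τ ⟨0, hH⟩).1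
        + ∑ h, (f (τ h).1 (τ h).2
            - Tbeta H layer φ r β piref f (τ h).1 (τ h).2) := by
  have hβ' : β ≠ 0 := ne_of_gt hβ
  have hratio : (∏ h, gibbs β piref f (τ h).1 (τ h).2) /
      (∏ h, piref (τ h).1 (τ h).2)
      = Real.exp (∑ h, (f (τ h).1 (τ h).2 - Vf β piref f (τ h).1) / β) := by
    rw [Real.exp_sum, ← Finset.prod_div_distrib]
    refine Finset.prod_congr rfl fun h _ => ?_
    rw [gibbs, mul_comm, mul_div_assoc, div_self (hrefpos _ _).ne', mul_one]
  rw [hratio, Real.log_exp, ← Finset.sum_div, mul_comm, div_mul_cancel₀ _ hβ']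
  have hT : ∀ h : Fin H, Tbeta H layer φ r β piref f (τ h).1 (τ h).2
      = r (τ h).1 (τ h).2 +
        (if (h : ℕ) + 1 = H then 0 else Vf β piref f (φ (τ h).1 (τ h).2)) := by
    intro h
    rw [Tbeta, hlayτ]
    split <;> simp
  have key : (∑ h, Vf β piref f (τ h).1)
      = Vf β piref f (τ ⟨0, hH⟩).1 +
        ∑ h : Fin H, (if (h : ℕ) + 1 = H then 0
          else Vf β piref f (φ (τ h).1 (τ h).2)) := by
    obtain ⟨N, rfl⟩ : ∃ N, H = N + 1 := ⟨H - 1, (Nat.succ_pred_eq_of_pos hH).symm⟩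
    rw [Fin.sum_univ_succ, Fin.sum_univ_castSucc]
    have h0 : (0 : Fin (N + 1)) = ⟨0, hH⟩ := rfl
    rw [h0]
    have hlast : ((Fin.last N : Fin (N + 1)) : ℕ) + 1 = N + 1 := by simp
    rw [if_pos hlast, add_zero]
    congr 1
    refine Finset.sum_congr rfl fun i _ => ?_
    have hne : ((i.castSucc : Fin (N + 1)) : ℕ) + 1 ≠ N + 1 := by
      simp only [Fin.coe_castSucc]; omega
    rw [if_neg hne]
    have hlt : ((i.castSucc : Fin (N + 1)) : ℕ) + 1 < N + 1 := by
      simp only [Fin.coe_castSucc]; omega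
    have := hadm i.castSucc hlt
    have heq : (⟨((i.castSucc : Fin (N + 1)) : ℕ) + 1, hlt⟩ : Fin (N + 1)) = i.succ := by
      ext; simp
    rw [heq] at this
    rw [← this]
  simp_rw [hT]
  rw [Finset.sum_sub_distrib, Finset.sum_sub_distrib, Finset.sum_add_distrib, key]
  ring

end Stmt4
end

section
/- (Central regret decomposition.) In a deterministic contextual MDP with reference policy π_ref (π_ref(a|s) > 0 for all s, a) and β > 0, for every policy π with π(a|s) > 0 for all s, a, and every policy ν, J_β(π*_β) − J_β(π) = E_{τ∼ν}[β log π(τ)] − E_{τ∼ν}[β log π*_β(τ)] + E_{τ∼π}[β log(π(τ)/π_ref(τ)) − r(τ)] − E_{τ∼ν}[β log(π(τ)/π_ref(τ)) − r(τ)]. -/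
open scoped BigOperators Classical

namespace Stmt5

/-- The KL-regularized soft value function
`V_f(s) = β log ∑_a π_ref(a|s) e^{f(s,a)/β}`. -/
noncomputable def Vf {S A : Type} [Fintype A] (β : ℝ) (piref : S → A → ℝ)
    (f : S → A → ℝ) (s : S) : ℝ :=
  β * Real.log (∑ a, piref s a * Real.exp (f s a / β))

/-- The Gibbs policy `π_f(a|s) = π_ref(a|s) e^{(f(s,a) - V_f(s))/β}`. -/
noncomputable def gibbs {S A : Type} [Fintype A] (β : ℝ) (piref : S → A → ℝ)
    (f : S → A → ℝ) (s : S) (a : A) : ℝ :=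
  piref s a * Real.exp ((f s a - Vf β piref f s) / β)

/-- The trajectory distribution of a policy in a deterministic contextual MDP:
`d^π(τ) = ρ(s_1)·∏_h π(a_h|s_h)` if `τ` is admissible
(`s_{h+1} = φ(s_h,a_h)` for all `h < H`), and `d^π(τ) = 0` otherwise. -/
noncomputable def dpi {S A : Type} {H : ℕ} (hH : 0 < H) (φ : S → A → S)
    (ρ : S → ℝ) (pol : S → A → ℝ) (τ : Fin H → S × A) : ℝ :=
  if ∀ (h : Fin H) (hlt : (h : ℕ) + 1 < H),
      (τ ⟨(h : ℕ) + 1, hlt⟩).1 = φ (τ h).1 (τ h).2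
  then ρ (τ ⟨0, hH⟩).1 * ∏ h, pol (τ h).1 (τ h).2 else 0

/-- Total reward of a trajectory: `r(τ) = ∑_h r(s_h,a_h)`. -/
def rTraj {S A : Type} {H : ℕ} (r : S → A → ℝ) (τ : Fin H → S × A) : ℝ :=
  ∑ h, r (τ h).1 (τ h).2

/-- Product probability a policy assigns to a trajectory:
`π(τ) = ∏_h π(a_h|s_h)`. -/
def polProd {S A : Type} {H : ℕ} (pol : S → A → ℝ) (τ : Fin H → S × A) : ℝ :=
  ∏ h, pol (τ h).1 (τ h).2

/-- The KL-regularized objective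
`J_β(π) = E_{τ∼π}[ r(τ) - β log (π(τ)/π_ref(τ)) ]`. -/
noncomputable def J {S A : Type} [Fintype S] [Fintype A] {H : ℕ} (hH : 0 < H)
    (φ : S → A → S) (β : ℝ) (ρ : S → ℝ) (r : S → A → ℝ)
    (piref pol : S → A → ℝ) : ℝ :=
  ∑ τ : Fin H → S × A, dpi hH φ ρ pol τ *
    (rTraj r τ - β * Real.log (polProd pol τ / polProd piref τ))

section Aux

variable {S A : Type}

noncomputable def stPath (φ : S → A → S) : (n : ℕ) → S → (Fin n → A) → Fin n → S
  | 0, _, _ => Fin.elim0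
  | n+1, s0, as => Fin.cons s0 (stPath φ n (φ s0 (as 0)) fun i => as i.succ)

@[simp] lemma stPath_zero (φ : S → A → S) (n : ℕ) (s0 : S) (as : Fin (n+1) → A) :
    stPath φ (n+1) s0 as 0 = s0 := by
  simp [stPath]

@[simp] lemma stPath_succ (φ : S → A → S) (n : ℕ) (s0 : S) (as : Fin (n+1) → A)
    (i : Fin n) :
    stPath φ (n+1) s0 as i.succ = stPath φ n (φ s0 (as 0)) (fun j => as j.succ) i := by
  simp [stPath]

lemma stPath_mk_zero (φ : S → A → S) (n : ℕ) (hn : 0 < n) (s0 : S) (as : Fin n → A) :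
    stPath φ n s0 as ⟨0, hn⟩ = s0 := by
  cases n with
  | zero => omega
  | succ m =>
      have : (⟨0, hn⟩ : Fin (m+1)) = 0 := rfl
      rw [this, stPath_zero]

lemma stPath_mk_succ (φ : S → A → S) :
    ∀ (k n : ℕ) (s0 : S) (as : Fin n → A) (hk : k + 1 < n),
      stPath φ n s0 as ⟨k+1, hk⟩ =
        φ (stPath φ n s0 as ⟨k, by omega⟩) (as ⟨k, by omega⟩) := by
  intro k
  induction k with
  | zero =>
      intro n s0 as hk
      match n, hk with
      | (m+1), hk =>
        have h1 : (⟨1, hk⟩ : Fin (m+1)) = Fin.succ ⟨0, by omega⟩ := rfl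
        rw [h1, stPath_succ]
        rw [stPath_mk_zero φ m (by omega)]
        rw [stPath_mk_zero φ (m+1) (by omega)]
        congr 1
  | succ j ih =>
      intro n s0 as hk
      match n, hk with
      | (m+1), hk =>
        have h1 : (⟨j+2, hk⟩ : Fin (m+1)) = Fin.succ ⟨j+1, by omega⟩ := rfl
        rw [h1, stPath_succ]
        rw [ih m (φ s0 (as 0)) (fun j => as j.succ) (by omega)]
        have h2 : (⟨j+1, by omega⟩ : Fin (m+1)) = Fin.succ ⟨j, by omega⟩ := rfl
        rw [h2, stPath_succ]

lemma sum_prod_stPath [Fintype A] (φ : S → A → S) (p : S → A → ℝ)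
    (hp : ∀ s, ∑ a, p s a = 1) :
    ∀ (n : ℕ) (s0 : S), ∑ as : Fin n → A, ∏ h, p (stPath φ n s0 as h) (as h) = 1 := by
  intro n
  induction n with
  | zero => intro s0; simp
  | succ m ih =>
      intro s0
      rw [← (Fin.consEquiv (fun _ : Fin (m+1) => A)).sum_comp
        (fun as => ∏ h, p (stPath φ (m+1) s0 as h) (as h))]
      rw [Fintype.sum_prod_type]
      have key : ∀ (a0 : A) (rest : Fin m → A),
          ∏ h, p (stPath φ (m+1) s0 (Fin.cons a0 rest) h) ((Fin.cons a0 rest : Fin (m+1) → A) h)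
            = p s0 a0 * ∏ i, p (stPath φ m (φ s0 a0) rest i) (rest i) := by
        intro a0 rest
        rw [Fin.prod_univ_succ]
        simp [Fin.cons_zero, Fin.cons_succ]
      calc ∑ a0 : A, ∑ rest : Fin m → A,
            ∏ h, p (stPath φ (m+1) s0 (Fin.consEquiv _ (a0, rest)) h)
              ((Fin.consEquiv (fun _ : Fin (m+1) => A) (a0, rest)) h)
          = ∑ a0 : A, ∑ rest : Fin m → A,
              p s0 a0 * ∏ i, p (stPath φ m (φ s0 a0) rest i) (rest i) := by
            refine Finset.sum_congr rfl fun a0 _ => Finset.sum_congr rfl fun rest _ => ?_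
            exact key a0 rest
        _ = ∑ a0 : A, p s0 a0 * ∑ rest : Fin m → A,
              ∏ i, p (stPath φ m (φ s0 a0) rest i) (rest i) := by
            refine Finset.sum_congr rfl fun a0 _ => ?_
            rw [Finset.mul_sum]
        _ = ∑ a0 : A, p s0 a0 * 1 := by
            refine Finset.sum_congr rfl fun a0 _ => ?_
            rw [ih (φ s0 a0)]
        _ = 1 := by simp [hp s0]

/-- Mass lemma: expectation of a function of the initial state. -/
lemma mass [Fintype S] [Fintype A] {H : ℕ} (hH : 0 < H) (φ : S → A → S) (ρ : S → ℝ)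
    (p : S → A → ℝ) (hp : ∀ s, ∑ a, p s a = 1) (g : S → ℝ) :
    ∑ τ : Fin H → S × A, dpi hH φ ρ p τ * g ((τ ⟨0, hH⟩).1) = ∑ s, ρ s * g s := by
  classical
  have step1 : ∑ τ : Fin H → S × A, dpi hH φ ρ p τ * g ((τ ⟨0, hH⟩).1)
      = ∑ τ ∈ Finset.univ.filter (fun τ : Fin H → S × A =>
          ∀ (h : Fin H) (hlt : (h : ℕ) + 1 < H),
            (τ ⟨(h : ℕ) + 1, hlt⟩).1 = φ (τ h).1 (τ h).2),
          (ρ (τ ⟨0, hH⟩).1 * ∏ h, p (τ h).1 (τ h).2) * g ((τ ⟨0, hH⟩).1) := by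
    rw [Finset.sum_filter]
    refine Finset.sum_congr rfl fun τ _ => ?_
    unfold dpi
    split <;> simp
  rw [step1]
  have step2 : ∑ τ ∈ Finset.univ.filter (fun τ : Fin H → S × A =>
          ∀ (h : Fin H) (hlt : (h : ℕ) + 1 < H),
            (τ ⟨(h : ℕ) + 1, hlt⟩).1 = φ (τ h).1 (τ h).2),
          (ρ (τ ⟨0, hH⟩).1 * ∏ h, p (τ h).1 (τ h).2) * g ((τ ⟨0, hH⟩).1)
      = ∑ q : S × (Fin H → A),
          (ρ q.1 * ∏ h, p (stPath φ H q.1 q.2 h) (q.2 h)) * g q.1 := by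
    refine Finset.sum_nbij' (i := fun τ => ((τ ⟨0, hH⟩).1, fun h => (τ h).2))
      (j := fun q => fun h => (stPath φ H q.1 q.2 h, q.2 h)) ?_ ?_ ?_ ?_ ?_
    · intro τ _; exact Finset.mem_univ _
    · intro q _
      simp only [Finset.mem_filter, Finset.mem_univ, true_and]
      intro h hlt
      exact stPath_mk_succ φ (h : ℕ) H q.1 q.2 hlt
    · intro τ hτ
      simp only [Finset.mem_filter, Finset.mem_univ, true_and] at hτ
      funext h
      have key : ∀ (k : ℕ) (hk : k < H),
          stPath φ H (τ ⟨0, hH⟩).1 (fun h => (τ h).2) ⟨k, hk⟩ = (τ ⟨k, hk⟩).1 := by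
        intro k
        induction k with
        | zero => intro hk; exact stPath_mk_zero φ H hH _ _
        | succ j ihj =>
            intro hk
            rw [stPath_mk_succ φ j H _ _ hk, ihj (by omega)]
            exact (hτ ⟨j, by omega⟩ hk).symm
      have h2 := key (h : ℕ) h.isLt
      have h3 : (⟨(h : ℕ), h.isLt⟩ : Fin H) = h := rfl
      rw [h3] at h2
      exact Prod.ext h2 rfl
    · intro q _
      exact Prod.ext (stPath_mk_zero φ H hH q.1 q.2) rfl
    · intro τ hτ
      simp only [Finset.mem_filter, Finset.mem_univ, true_and] at hτ
      have key : ∀ (k : ℕ) (hk : k < H),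
          stPath φ H (τ ⟨0, hH⟩).1 (fun h => (τ h).2) ⟨k, hk⟩ = (τ ⟨k, hk⟩).1 := by
        intro k
        induction k with
        | zero => intro hk; exact stPath_mk_zero φ H hH _ _
        | succ j ihj =>
            intro hk
            rw [stPath_mk_succ φ j H _ _ hk, ihj (by omega)]
            exact (hτ ⟨j, by omega⟩ hk).symm
      show (ρ (τ ⟨0, hH⟩).1 * ∏ h, p (τ h).1 (τ h).2) * g ((τ ⟨0, hH⟩).1)
        = (ρ (τ ⟨0, hH⟩).1 *
            ∏ h, p (stPath φ H (τ ⟨0, hH⟩).1 (fun h' => (τ h').2) h) ((τ h).2)) *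
          g ((τ ⟨0, hH⟩).1)
      have hprod : (∏ h, p (stPath φ H (τ ⟨0, hH⟩).1 (fun h' => (τ h').2) h) ((τ h).2))
          = ∏ h, p (τ h).1 (τ h).2 :=
        Finset.prod_congr rfl fun h _ =>
          congrArg (fun x => p x ((τ h).2)) (key (h : ℕ) h.isLt)
      rw [hprod]
  rw [step2, Fintype.sum_prod_type]
  refine Finset.sum_congr rfl fun s _ => ?_
  have : ∀ as : Fin H → A,
      (ρ s * ∏ h, p (stPath φ H s as h) (as h)) * g s
        = (ρ s * g s) * ∏ h, p (stPath φ H s as h) (as h) := fun as => by ring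
  rw [Finset.sum_congr rfl fun as _ => this as, ← Finset.mul_sum,
    sum_prod_stPath φ p hp H s, mul_one]

end Aux

section Aux2

variable {S A : Type}

lemma polProd_pos {H : ℕ} {q : S → A → ℝ} (hq : ∀ s a, 0 < q s a) (τ : Fin H → S × A) :
    0 < polProd q τ :=
  Finset.prod_pos fun h _ => hq _ _

lemma gibbs_pos [Fintype A] (β : ℝ) (piref f : S → A → ℝ)
    (h : ∀ s a, 0 < piref s a) (s : S) (a : A) : 0 < gibbs β piref f s a :=
  mul_pos (h s a) (Real.exp_pos _)

lemma gibbs_sum [Fintype A] [Nonempty A] {β : ℝ} (hβ : 0 < β) (piref f : S → A → ℝ)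
    (href : ∀ s a, 0 < piref s a) (s : S) :
    ∑ a, gibbs β piref f s a = 1 := by
  have hSig : 0 < ∑ a, piref s a * Real.exp (f s a / β) :=
    Finset.sum_pos (fun a _ => mul_pos (href s a) (Real.exp_pos _)) Finset.univ_nonempty
  have hβ' : β ≠ 0 := ne_of_gt hβ
  unfold gibbs Vf
  have hlog : β * Real.log (∑ a, piref s a * Real.exp (f s a / β)) / β
      = Real.log (∑ a, piref s a * Real.exp (f s a / β)) := by
    field_simp
  calc ∑ a, piref s a *
        Real.exp ((f s a - β * Real.log (∑ a, piref s a * Real.exp (f s a / β))) / β)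
      = ∑ a, (piref s a * Real.exp (f s a / β)) /
          (∑ a', piref s a' * Real.exp (f s a' / β)) := by
        refine Finset.sum_congr rfl fun a _ => ?_
        rw [sub_div, Real.exp_sub, hlog, Real.exp_log hSig]
        ring
    _ = 1 := by
        rw [← Finset.sum_div, div_self (ne_of_gt hSig)]

/-- Telescoping identity for the optimal Q along an admissible trajectory
starting at layer 0. -/
lemma telescope [Fintype A] {H : ℕ} (hH : 0 < H) (layer : S → ℕ) (φ : S → A → S)
    (hφ : ∀ s a, layer s + 1 < H → layer (φ s a) = layer s + 1)
    (r : S → A → ℝ) (β : ℝ) (piref : S → A → ℝ) (Qstar : S → A → ℝ)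
    (hQ : ∀ s a, Qstar s a =
      if layer s + 1 = H then r s a else r s a + Vf β piref Qstar (φ s a))
    (τ : Fin H → S × A)
    (hadm : ∀ (h : Fin H) (hlt : (h : ℕ) + 1 < H),
      (τ ⟨(h : ℕ) + 1, hlt⟩).1 = φ (τ h).1 (τ h).2)
    (h0 : layer (τ ⟨0, hH⟩).1 = 0) :
    ∑ h : Fin H, (Qstar (τ h).1 (τ h).2 - Vf β piref Qstar (τ h).1)
      = rTraj r τ - Vf β piref Qstar (τ ⟨0, hH⟩).1 := by
  classical
  have hlay : ∀ (k : ℕ) (hk : k < H), layer (τ ⟨k, hk⟩).1 = k := by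
    intro k
    induction k with
    | zero => intro hk; exact h0
    | succ j ih =>
        intro hk
        have hj : j < H := by omega
        have hstep := hadm ⟨j, hj⟩ (by simpa using hk)
        have : (τ ⟨j + 1, hk⟩).1 = φ (τ ⟨j, hj⟩).1 (τ ⟨j, hj⟩).2 := hstep
        rw [this, hφ _ _ (by rw [ih hj]; exact hk), ih hj]
  set W : ℕ → ℝ := fun k =>
    if hk : k < H then Vf β piref Qstar (τ ⟨k, hk⟩).1 else 0 with hW
  have hQw : ∀ h : Fin H, Qstar (τ h).1 (τ h).2 = r (τ h).1 (τ h).2 + W ((h : ℕ) + 1) := by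
    intro h
    have hlh : layer (τ h).1 = (h : ℕ) := hlay (h : ℕ) h.isLt
    rw [hQ]
    by_cases hend : (h : ℕ) + 1 = H
    · rw [if_pos (by rw [hlh]; exact hend)]
      simp only [hW]; beta_reduce
      simp only [hend]
      rw [dif_neg (lt_irrefl H), add_zero]
    · have hlt : (h : ℕ) + 1 < H := lt_of_le_of_ne h.isLt hend
      rw [if_neg (by rw [hlh]; exact hend)]
      simp only [hW]; beta_reduce
      rw [dif_pos hlt]
      have := hadm h hlt
      rw [this]
  have hVw : ∀ h : Fin H, Vf β piref Qstar (τ h).1 = W (h : ℕ) := by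
    intro h
    simp only [hW]; beta_reduce
    rw [dif_pos h.isLt]
  calc ∑ h : Fin H, (Qstar (τ h).1 (τ h).2 - Vf β piref Qstar (τ h).1)
      = ∑ h : Fin H, (r (τ h).1 (τ h).2 + (W ((h : ℕ) + 1) - W (h : ℕ))) := by
        refine Finset.sum_congr rfl fun h _ => ?_
        rw [hQw h, hVw h]; ring
    _ = rTraj r τ + ∑ h : Fin H, (W ((h : ℕ) + 1) - W (h : ℕ)) := by
        rw [Finset.sum_add_distrib]; rfl
    _ = rTraj r τ + (W H - W 0) := by
        congr 1
        rw [Fin.sum_univ_eq_sum_range (fun k => W (k + 1) - W k) H]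
        exact Finset.sum_range_sub W H
    _ = rTraj r τ - Vf β piref Qstar (τ ⟨0, hH⟩).1 := by
        simp only [hW]; beta_reduce
        rw [dif_neg (lt_irrefl H), dif_pos hH]
        ring

/-- Value of the log-ratio of the Gibbs policy along an admissible trajectory. -/
lemma gibbs_logratio [Fintype A] {H : ℕ} (hH : 0 < H) (layer : S → ℕ) (φ : S → A → S)
    (hφ : ∀ s a, layer s + 1 < H → layer (φ s a) = layer s + 1)
    (r : S → A → ℝ) {β : ℝ} (hβ : 0 < β) (piref : S → A → ℝ)
    (hrefpos : ∀ s a, 0 < piref s a) (Qstar : S → A → ℝ)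
    (hQ : ∀ s a, Qstar s a =
      if layer s + 1 = H then r s a else r s a + Vf β piref Qstar (φ s a))
    (τ : Fin H → S × A)
    (hadm : ∀ (h : Fin H) (hlt : (h : ℕ) + 1 < H),
      (τ ⟨(h : ℕ) + 1, hlt⟩).1 = φ (τ h).1 (τ h).2)
    (h0 : layer (τ ⟨0, hH⟩).1 = 0) :
    β * Real.log (polProd (gibbs β piref Qstar) τ / polProd piref τ)
      = rTraj r τ - Vf β piref Qstar (τ ⟨0, hH⟩).1 := by
  have hratio : polProd (gibbs β piref Qstar) τ / polProd piref τ
      = Real.exp ((∑ h, (Qstar (τ h).1 (τ h).2 - Vf β piref Qstar (τ h).1)) / β) := by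
    unfold polProd gibbs
    rw [Finset.prod_mul_distrib]
    rw [mul_comm, mul_div_assoc,
      div_self (ne_of_gt (Finset.prod_pos fun h _ => hrefpos _ _)), mul_one]
    rw [← Real.exp_sum, ← Finset.sum_div]
  rw [hratio, Real.log_exp, mul_comm, div_mul_cancel₀ _ (ne_of_gt hβ)]
  exact telescope hH layer φ hφ r β piref Qstar hQ τ hadm h0

/-- Support of `dpi`. -/
lemma dpi_support {H : ℕ} (hH : 0 < H) (φ : S → A → S) (ρ : S → ℝ)
    (p : S → A → ℝ) (τ : Fin H → S × A) [Fintype A]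
    (h : dpi hH φ ρ p τ ≠ 0) :
    (∀ (h : Fin H) (hlt : (h : ℕ) + 1 < H),
        (τ ⟨(h : ℕ) + 1, hlt⟩).1 = φ (τ h).1 (τ h).2) ∧ ρ (τ ⟨0, hH⟩).1 ≠ 0 := by
  unfold dpi at h
  split at h
  · refine ⟨by assumption, fun hz => h ?_⟩
    rw [hz, zero_mul]
  · exact absurd rfl h

end Aux2

/-- **Central regret decomposition.** In a deterministic contextual MDP with
everywhere positive reference policy `π_ref` and `β > 0`, for every policy `π`
with `π(a|s) > 0` for all `s, a` and every policy `ν`: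
`J_β(π*_β) - J_β(π) = E_ν[β log π(τ)] - E_ν[β log π*_β(τ)]
  + E_π[β log(π(τ)/π_ref(τ)) - r(τ)] - E_ν[β log(π(τ)/π_ref(τ)) - r(τ)]`. -/
theorem central_regret_decomposition {S A : Type} [Fintype S] [Fintype A]
    {H : ℕ} (hH : 0 < H)
    (layer : S → ℕ) (hlayer : ∀ s, layer s < H)
    (φ : S → A → S) (hφ : ∀ s a, layer s + 1 < H → layer (φ s a) = layer s + 1)
    (ρ : S → ℝ) (hρ0 : ∀ s, 0 ≤ ρ s) (hρ1 : ∑ s, ρ s = 1)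
    (hρsupp : ∀ s, layer s ≠ 0 → ρ s = 0)
    (r : S → A → ℝ) (β : ℝ) (hβ : 0 < β)
    (piref : S → A → ℝ) (hrefpos : ∀ s a, 0 < piref s a)
    (href1 : ∀ s, ∑ a, piref s a = 1)
    (Qstar : S → A → ℝ)
    (hQ : ∀ s a, Qstar s a =
      if layer s + 1 = H then r s a else r s a + Vf β piref Qstar (φ s a))
    (pol : S → A → ℝ) (hpol : ∀ s a, 0 < pol s a)
    (hpol1 : ∀ s, ∑ a, pol s a = 1)
    (ν : S → A → ℝ) (hν0 : ∀ s a, 0 ≤ ν s a) (hν1 : ∀ s, ∑ a, ν s a = 1) :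
    J hH φ β ρ r piref (gibbs β piref Qstar) - J hH φ β ρ r piref pol
      = (∑ τ : Fin H → S × A, dpi hH φ ρ ν τ * (β * Real.log (polProd pol τ)))
        - (∑ τ : Fin H → S × A, dpi hH φ ρ ν τ *
            (β * Real.log (polProd (gibbs β piref Qstar) τ)))
        + (∑ τ : Fin H → S × A, dpi hH φ ρ pol τ *
            (β * Real.log (polProd pol τ / polProd piref τ) - rTraj r τ))
        - (∑ τ : Fin H → S × A, dpi hH φ ρ ν τ *
            (β * Real.log (polProd pol τ / polProd piref τ) - rTraj r τ)) := by
    classical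
  haveI hSne : Nonempty S := by
    by_contra h
    rw [not_nonempty_iff] at h
    simp only [Finset.univ_eq_empty, Finset.sum_empty] at hρ1
    norm_num at hρ1
  haveI hAne : Nonempty A := by
    by_contra h
    rw [not_nonempty_iff] at h
    obtain ⟨s⟩ := hSne
    have := hpol1 s
    simp only [Finset.univ_eq_empty, Finset.sum_empty] at this
    norm_num at this
  have hπs_sum : ∀ s, ∑ a, gibbs β piref Qstar s a = 1 :=
    fun s => gibbs_sum hβ piref Qstar hrefpos s
  have hπs_pos : ∀ s a, 0 < gibbs β piref Qstar s a := gibbs_pos β piref Qstar hrefpos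
  have hsupp : ∀ (p : S → A → ℝ) (τ : Fin H → S × A), dpi hH φ ρ p τ ≠ 0 →
      (∀ (h : Fin H) (hlt : (h : ℕ) + 1 < H),
          (τ ⟨(h : ℕ) + 1, hlt⟩).1 = φ (τ h).1 (τ h).2)
        ∧ layer (τ ⟨0, hH⟩).1 = 0 := by
    intro p τ hne
    obtain ⟨hadm, hρne⟩ := dpi_support hH φ ρ p τ hne
    exact ⟨hadm, by by_contra hl; exact hρne (hρsupp _ hl)⟩
  have hlogratio : ∀ τ : Fin H → S × A,
      (∀ (h : Fin H) (hlt : (h : ℕ) + 1 < H),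
          (τ ⟨(h : ℕ) + 1, hlt⟩).1 = φ (τ h).1 (τ h).2) →
      layer (τ ⟨0, hH⟩).1 = 0 →
      β * Real.log (polProd (gibbs β piref Qstar) τ / polProd piref τ)
        = rTraj r τ - Vf β piref Qstar (τ ⟨0, hH⟩).1 :=
    fun τ hadm h0 => gibbs_logratio hH layer φ hφ r hβ piref hrefpos Qstar hQ τ hadm h0
  have eq1 : J hH φ β ρ r piref (gibbs β piref Qstar) = ∑ s, ρ s * Vf β piref Qstar s := by
    rw [← mass hH φ ρ (gibbs β piref Qstar) hπs_sum (Vf β piref Qstar)]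
    unfold J
    refine Finset.sum_congr rfl fun τ _ => ?_
    by_cases hz : dpi hH φ ρ (gibbs β piref Qstar) τ = 0
    · rw [hz, zero_mul, zero_mul]
    · obtain ⟨hadm, h0⟩ := hsupp _ τ hz
      rw [hlogratio τ hadm h0]
      ring
  have eq2 : J hH φ β ρ r piref pol
      = - ∑ τ : Fin H → S × A, dpi hH φ ρ pol τ *
          (β * Real.log (polProd pol τ / polProd piref τ) - rTraj r τ) := by
    unfold J
    rw [← Finset.sum_neg_distrib]
    refine Finset.sum_congr rfl fun τ _ => ?_
    ring
  have eq3 : (∑ τ : Fin H → S × A, dpi hH φ ρ ν τ * (β * Real.log (polProd pol τ)))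
        - (∑ τ : Fin H → S × A, dpi hH φ ρ ν τ *
            (β * Real.log (polProd (gibbs β piref Qstar) τ)))
        - (∑ τ : Fin H → S × A, dpi hH φ ρ ν τ *
            (β * Real.log (polProd pol τ / polProd piref τ) - rTraj r τ))
      = ∑ s, ρ s * Vf β piref Qstar s := by
    rw [← mass hH φ ρ ν hν1 (Vf β piref Qstar)]
    rw [← Finset.sum_sub_distrib, ← Finset.sum_sub_distrib]
    refine Finset.sum_congr rfl fun τ _ => ?_
    by_cases hz : dpi hH φ ρ ν τ = 0
    · rw [hz]; ring
    · obtain ⟨hadm, h0⟩ := hsupp ν τ hz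
      have hpolpos := polProd_pos hpol τ
      have hrefposP := polProd_pos hrefpos τ
      have hπsposP := polProd_pos hπs_pos τ
      have hA : Real.log (polProd pol τ / polProd piref τ)
          = Real.log (polProd pol τ) - Real.log (polProd piref τ) :=
        Real.log_div (ne_of_gt hpolpos) (ne_of_gt hrefposP)
      have hB : β * Real.log (polProd (gibbs β piref Qstar) τ)
          = rTraj r τ - Vf β piref Qstar (τ ⟨0, hH⟩).1
            + β * Real.log (polProd piref τ) := by
        have h1 := hlogratio τ hadm h0
        rw [Real.log_div (ne_of_gt hπsposP) (ne_of_gt hrefposP), mul_sub] at h1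
        linarith
      rw [hA]
      linear_combination (-(dpi hH φ ρ ν τ)) * hB
  rw [eq1, eq2]
  linarith [eq3]

end Stmt5
end

section
/- (Sigmoid inverse-Lipschitz bound.) Let σ(x) = e^x/(1+e^x) be the sigmoid function. If X ≥ 0, Y ≥ 1, x ∈ [−X, X], and y ∈ [−Y, Y], then |x − y| ≤ 8·(X + Y)·e^{2Y}·|σ(x) − σ(y)|. -/
/-- The sigmoid (logistic) function `σ(x) = eˣ/(1+eˣ)`. -/
noncomputable def sigmoid (x : ℝ) : ℝ := Real.exp x / (1 + Real.exp x)

lemma sigmoid_hasDerivAt (t : ℝ) :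
    HasDerivAt sigmoid (Real.exp t / (1 + Real.exp t) ^ 2) t := by
  have h0 : (1 : ℝ) + Real.exp t ≠ 0 := by positivity
  have := (Real.hasDerivAt_exp t).div ((hasDerivAt_const t (1:ℝ)).add (Real.hasDerivAt_exp t)) h0
  refine HasDerivAt.congr_deriv (f := sigmoid) this ?_
  simp only [Pi.add_apply]
  ring

lemma sigmoid_monotone : Monotone sigmoid := by
  have : ∀ t : ℝ, 0 ≤ deriv sigmoid t := by
    intro t
    rw [(sigmoid_hasDerivAt t).deriv]
    positivity
  exact monotone_of_deriv_nonneg (fun t => (sigmoid_hasDerivAt t).differentiableAt) this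

/-- Key lower bound on a symmetric interval. -/
lemma sigmoid_gap (M a b : ℝ) (hM : 0 ≤ M) (ha : |a| ≤ M) (hb : |b| ≤ M) :
    Real.exp (-M) / 4 * |a - b| ≤ |sigmoid a - sigmoid b| := by
  have key : ∀ u v : ℝ, |u| ≤ M → |v| ≤ M → u ≤ v →
      Real.exp (-M) / 4 * (v - u) ≤ sigmoid v - sigmoid u := by
    intro u v hu hv huv
    have hD : Convex ℝ (Set.Icc (-M) M) := convex_Icc _ _
    have hcont : ContinuousOn sigmoid (Set.Icc (-M) M) :=
      fun t _ => ((sigmoid_hasDerivAt t).differentiableAt.continuousAt).continuousWithinAt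
    have hdiff : DifferentiableOn ℝ sigmoid (interior (Set.Icc (-M) M)) :=
      fun t _ => ((sigmoid_hasDerivAt t).differentiableAt).differentiableWithinAt
    have hge : ∀ t ∈ interior (Set.Icc (-M) M),
        Real.exp (-M) / 4 ≤ deriv sigmoid t := by
      intro t ht
      rw [interior_Icc] at ht
      rw [(sigmoid_hasDerivAt t).deriv]
      have hle : Real.exp t ≤ Real.exp M := Real.exp_le_exp.2 (le_of_lt ht.2)
      have hge' : Real.exp (-M) ≤ Real.exp t := Real.exp_le_exp.2 (le_of_lt ht.1)
      have h1 : (0:ℝ) < 1 + Real.exp t := by positivity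
      rw [div_le_div_iff₀ (by norm_num) (by positivity)]
      have h2 : (1 + Real.exp t) ^ 2 ≤ 4 * Real.exp M * Real.exp t := by
        have hem : (1:ℝ) ≤ Real.exp M := Real.one_le_exp hM
        have h3 : (1 + Real.exp t) ^ 2 = 1 + 2 * Real.exp t + Real.exp t ^ 2 := by ring
        have htM : -M < t := ht.1
        have h4 : (1:ℝ) ≤ Real.exp M * Real.exp t := by
          rw [← Real.exp_add]
          exact Real.one_le_exp (by linarith)
        have h5 : Real.exp t ^ 2 ≤ Real.exp M * Real.exp t := by
          have := Real.exp_pos t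
          nlinarith
        have h6 : Real.exp t ≤ Real.exp M * Real.exp t :=
          le_mul_of_one_le_left (Real.exp_pos t).le hem
        nlinarith
      calc Real.exp (-M) * (1 + Real.exp t) ^ 2
          ≤ Real.exp (-M) * (4 * Real.exp M * Real.exp t) := by
            exact mul_le_mul_of_nonneg_left h2 (Real.exp_pos _).le
        _ = Real.exp t * 4 := by
            rw [show Real.exp (-M) * (4 * Real.exp M * Real.exp t)
              = (Real.exp (-M) * Real.exp M) * (4 * Real.exp t) by ring,
              ← Real.exp_add]
            simp
            ring
    have huI : u ∈ Set.Icc (-M) M := abs_le.1 hu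
    have hvI : v ∈ Set.Icc (-M) M := abs_le.1 hv
    exact hD.mul_sub_le_image_sub_of_le_deriv hcont hdiff hge u huI v hvI huv
  rcases le_total a b with h | h
  · have := key a b ha hb h
    rw [abs_sub_comm a b, abs_of_nonneg (sub_nonneg.2 h),
        abs_sub_comm (sigmoid a) (sigmoid b),
        abs_of_nonneg (sub_nonneg.2 (sigmoid_monotone h))]
    linarith
  · have := key b a hb ha h
    rw [abs_of_nonneg (sub_nonneg.2 h),
        abs_of_nonneg (sub_nonneg.2 (sigmoid_monotone h))]
    linarith

/-- **Sigmoid inverse-Lipschitz bound.** If `X ≥ 0`, `Y ≥ 1`, `x ∈ [-X, X]`,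
and `y ∈ [-Y, Y]`, then `|x - y| ≤ 8 (X + Y) e^{2Y} |σ(x) - σ(y)|`. -/
theorem sigmoid_inverse_lipschitz (X Y x y : ℝ) (hX : 0 ≤ X) (hY : 1 ≤ Y)
    (hx : x ∈ Set.Icc (-X) X) (hy : y ∈ Set.Icc (-Y) Y) :
    |x - y| ≤ 8 * (X + Y) * Real.exp (2 * Y) * |sigmoid x - sigmoid y| := by
  obtain ⟨hx1, hx2⟩ := hx
  obtain ⟨hy1, hy2⟩ := hy
  set x' : ℝ := max (-(2*Y)) (min x (2*Y)) with hx'def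
  have hYpos : (0:ℝ) < Y := by linarith
  have hx'mem : |x'| ≤ 2*Y := by
    rw [abs_le]
    constructor
    · exact le_max_left _ _
    · exact max_le (by linarith) (min_le_right _ _)
  have hymem : |y| ≤ 2*Y := by rw [abs_le]; constructor <;> linarith
  -- gap bound for x' and y
  have hgap := sigmoid_gap (2*Y) x' y (by linarith) hx'mem hymem
  -- |σ x' − σ y| ≤ |σ x − σ y| by monotonicity (x' is between y and x or equals x)
  have hmono : |sigmoid x' - sigmoid y| ≤ |sigmoid x - sigmoid y| := by
    rcases le_total x (2*Y) with h1 | h1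
    · rcases le_total (-(2*Y)) x with h2 | h2
      · have : x' = x := by rw [hx'def, min_eq_left h1, max_eq_right h2]
        rw [this]
      · -- x ≤ -2Y, x' = -2Y, so x ≤ x' ≤ y
        have hx'eq : x' = -(2*Y) := by
          rw [hx'def, min_eq_left h1, max_eq_left h2]
        have h3 : x ≤ x' := by rw [hx'eq]; exact h2
        have h4 : x' ≤ y := by rw [hx'eq]; linarith
        have m1 := sigmoid_monotone h3
        have m2 := sigmoid_monotone h4
        rw [abs_sub_comm (sigmoid x') _, abs_sub_comm (sigmoid x) _,
            abs_of_nonneg (by linarith), abs_of_nonneg (by linarith)]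
        linarith
    · -- 2Y ≤ x, x' = 2Y, so y ≤ x' ≤ x
      have hx'eq : x' = 2*Y := by
        rw [hx'def, min_eq_right h1, max_eq_right (by linarith)]
      have h3 : x' ≤ x := by rw [hx'eq]; exact h1
      have h4 : y ≤ x' := by rw [hx'eq]; linarith
      have m1 := sigmoid_monotone h3
      have m2 := sigmoid_monotone h4
      rw [abs_of_nonneg (by linarith), abs_of_nonneg (by linarith)]
      linarith
  -- |x - y| ≤ (X + Y) * |x' - y|
  have hclamp : |x - y| ≤ (X + Y) * |x' - y| := by
    have hXY1 : (1:ℝ) ≤ X + Y := by linarith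
    rcases le_total x (2*Y) with h1 | h1
    · rcases le_total (-(2*Y)) x with h2 | h2
      · have : x' = x := by rw [hx'def, min_eq_left h1, max_eq_right h2]
        rw [this]
        nlinarith [abs_nonneg (x - y)]
      · have hx'eq : x' = -(2*Y) := by
          rw [hx'def, min_eq_left h1, max_eq_left h2]
        have hxy : x - y ≤ 0 := by linarith
        have hx'y : x' - y ≤ -Y := by rw [hx'eq]; linarith
        rw [abs_of_nonpos hxy, abs_of_nonpos (by linarith)]
        have hXx : -X ≤ x := hx1
        nlinarith
    · have hx'eq : x' = 2*Y := by
        rw [hx'def, min_eq_right h1, max_eq_right (by linarith)]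
      have hxy : 0 ≤ x - y := by linarith
      have hx'y : Y ≤ x' - y := by rw [hx'eq]; linarith
      rw [abs_of_nonneg hxy, abs_of_nonneg (by linarith)]
      nlinarith
  -- combine
  have hepos : (0:ℝ) < Real.exp (2*Y) := Real.exp_pos _
  have hinv : Real.exp (-(2*Y)) * Real.exp (2*Y) = 1 := by
    rw [← Real.exp_add]; simp
  have hXYpos : (0:ℝ) < X + Y := by linarith
  calc |x - y| ≤ (X + Y) * |x' - y| := hclamp
    _ ≤ (X + Y) * (4 * Real.exp (2*Y) * |sigmoid x' - sigmoid y|) := by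
        apply mul_le_mul_of_nonneg_left _ (by linarith)
        have h := hgap
        have h4 : (0:ℝ) < Real.exp (-(2*Y)) := Real.exp_pos _
        nlinarith [abs_nonneg (sigmoid x' - sigmoid y)]
    _ ≤ (X + Y) * (4 * Real.exp (2*Y) * |sigmoid x - sigmoid y|) := by
        apply mul_le_mul_of_nonneg_left _ (by linarith)
        apply mul_le_mul_of_nonneg_left hmono (by positivity)
    _ ≤ 8 * (X + Y) * Real.exp (2 * Y) * |sigmoid x - sigmoid y| := by
        nlinarith [mul_nonneg (mul_nonneg hXYpos.le hepos.le)
          (abs_nonneg (sigmoid x - sigmoid y))]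
end

section
/- (Large regularized suboptimality of a poorly-covering reference policy in a two-armed bandit.) Let A = {a, b} with rewards r(a) = 1 and r(b) = 1/2. Let 0 < ε ≤ 1/2 and let π_ref be the distribution on A with π_ref(a) = ε, π_ref(b) = 1 − ε. Let β > 0 satisfy β·log(1/ε) ≤ 1/8. For a probability distribution π on A define J_β(π) = π(a)·r(a) + π(b)·r(b) − β·∑_{c∈A} π(c)·log(π(c)/π_ref(c)) (with 0·log 0 = 0). Then sup over probability distributions π on A of J_β(π) minus J_β(π_ref) is at least 1/8. -/
/-- The KL-regularized bandit objective on the two-armed bandit `A = {a, b}`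
(encoded as `Bool`, with `true = a`, `false = b`), rewards `r(a) = 1`,
`r(b) = 1/2`, and reference policy `π_ref(a) = ε`, `π_ref(b) = 1 - ε`:
`J_β(q) = E_{c∼q}[r(c)] - β·KL(q‖π_ref)` (with the convention `0·log 0 = 0`). -/
noncomputable def Jband (ε β : ℝ) (q : Bool → ℝ) : ℝ :=
  (q true * 1 + q false * (1 / 2))
    - β * (q true * Real.log (q true / ε)
        + q false * Real.log (q false / (1 - ε)))

/-- **Large regularized suboptimality of a poorly-covering reference policy in
a two-armed bandit.** With `0 < ε ≤ 1/2`, `β > 0`, and `β·log(1/ε) ≤ 1/8`,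
the supremum of `J_β` over probability distributions on the two arms exceeds
`J_β(π_ref)` by at least `1/8`. -/
theorem bandit_ref_suboptimal (ε β : ℝ) (hε0 : 0 < ε) (hε : ε ≤ 1 / 2)
    (hβ : 0 < β) (hβε : β * Real.log (1 / ε) ≤ 1 / 8) :
    1 / 8 ≤
      sSup {v : ℝ | ∃ q : Bool → ℝ, (∀ c, 0 ≤ q c) ∧ q true + q false = 1 ∧
          v = Jband ε β q}
        - Jband ε β (fun c => if c then ε else 1 - ε) := by
  have h1ε : 0 < 1 - ε := by linarith
  -- pointwise lower bound for relative entropy terms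
  have key : ∀ x p : ℝ, 0 ≤ x → 0 < p → x - p ≤ x * Real.log (x / p) := by
    intro x p hx hp
    rcases eq_or_lt_of_le hx with h | h
    · simp [← h]; positivity
    · have hlog : Real.log (p / x) ≤ p / x - 1 := Real.log_le_sub_one_of_pos (by positivity)
      have : Real.log (p / x) = - Real.log (x / p) := by
        rw [← Real.log_inv]; congr 1; field_simp
      rw [this] at hlog
      have : 1 - p / x ≤ Real.log (x / p) := by linarith
      have := mul_le_mul_of_nonneg_left this (le_of_lt h)
      calc x - p = x * (1 - p / x) := by field_simp
        _ ≤ x * Real.log (x / p) := this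
  -- the set is bounded above by 1
  have hbdd : BddAbove {v : ℝ | ∃ q : Bool → ℝ, (∀ c, 0 ≤ q c) ∧ q true + q false = 1 ∧
      v = Jband ε β q} := by
    refine ⟨1, fun v hv => ?_⟩
    obtain ⟨q, hq0, hqs, rfl⟩ := hv
    have h1 := key (q true) ε (hq0 true) hε0
    have h2 := key (q false) (1 - ε) (hq0 false) h1ε
    have hKL : 0 ≤ q true * Real.log (q true / ε) + q false * Real.log (q false / (1 - ε)) := by
      nlinarith
    have hEr : q true * 1 + q false * (1 / 2) ≤ 1 := by nlinarith [hq0 false]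
    have : 0 ≤ β * (q true * Real.log (q true / ε)
        + q false * Real.log (q false / (1 - ε))) := by positivity
    unfold Jband; linarith
  -- the point mass on `a` is in the set
  have hmem : Jband ε β (fun c => if c then (1:ℝ) else 0) ∈
      {v : ℝ | ∃ q : Bool → ℝ, (∀ c, 0 ≤ q c) ∧ q true + q false = 1 ∧ v = Jband ε β q} := by
    exact ⟨_, fun c => by cases c <;> norm_num, by norm_num, rfl⟩
  have hle := le_csSup hbdd hmem
  have hval : Jband ε β (fun c => if c then (1:ℝ) else 0)
      = 1 - β * Real.log (1 / ε) := by
    simp [Jband, Real.log_zero]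
  have href : Jband ε β (fun c => if c then ε else 1 - ε) = ε + (1 - ε) * (1/2) := by
    simp [Jband, div_self (ne_of_gt hε0), div_self (ne_of_gt h1ε), Real.log_one]
  rw [href]
  rw [hval] at hle
  linarith
end

section
/- (Coverability is bounded by the exponentiated density-ratio bound.) In a deterministic contextual MDP with reference policy π_ref (π_ref(a|s) > 0 for all s, a), let β > 0, V_max ≥ 0, and let Π be a set of policies such that every π ∈ Π satisfies |log(π(τ)/π_ref(τ))| ≤ V_max/β for every admissible trajectory τ. Then there exists a probability distribution μ over trajectories such that d^π(τ) ≤ e^{V_max/β}·μ(τ) for every π ∈ Π and every trajectory τ; in particular the trajectory-level coverability coefficient satisfies C_cov(Π) ≤ e^{V_max/β}. -/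
open scoped BigOperators Classical

namespace Stmt9

/-- The trajectory distribution of a policy in a deterministic contextual MDP:
`d^π(τ) = ρ(s_1)·∏_h π(a_h|s_h)` if `τ` is admissible
(`s_{h+1} = φ(s_h,a_h)` for all `h < H`), and `d^π(τ) = 0` otherwise. -/
noncomputable def dpi {S A : Type} {H : ℕ} (hH : 0 < H) (φ : S → A → S)
    (ρ : S → ℝ) (pol : S → A → ℝ) (τ : Fin H → S × A) : ℝ :=
  if ∀ (h : Fin H) (hlt : (h : ℕ) + 1 < H),
      (τ ⟨(h : ℕ) + 1, hlt⟩).1 = φ (τ h).1 (τ h).2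
  then ρ (τ ⟨0, hH⟩).1 * ∏ h, pol (τ h).1 (τ h).2 else 0

noncomputable def traj {S A : Type} (φ : S → A → S) : ∀ n, S → (Fin n → A) → Fin n → S
  | 0, _, _ => Fin.elim0
  | n+1, s, a => Fin.cons s (traj φ n (φ s (a 0)) (Fin.tail a))

lemma traj_zero {S A : Type} (φ : S → A → S) (n : ℕ) (hn : 0 < n) (s : S)
    (a : Fin n → A) : traj φ n s a ⟨0, hn⟩ = s := by
  cases n with
  | zero => omega
  | succ m => rfl

lemma traj_succ {S A : Type} (φ : S → A → S) (n : ℕ) (s : S) (a : Fin (n+1) → A)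
    (h : Fin n) : traj φ (n+1) s a h.succ = traj φ n (φ s (a 0)) (Fin.tail a) h := by
  simp [traj]

lemma traj_step {S A : Type} (φ : S → A → S) :
    ∀ (n : ℕ) (s : S) (a : Fin n → A) (k : ℕ) (hk : k + 1 < n),
      traj φ n s a ⟨k+1, hk⟩ =
        φ (traj φ n s a ⟨k, Nat.lt_of_succ_lt hk⟩) (a ⟨k, Nat.lt_of_succ_lt hk⟩) := by
  intro n
  induction n with
  | zero => intro s a k hk; omega
  | succ m ih =>
    intro s a k hk
    cases k with
    | zero =>
      have hm : 0 < m := by omega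
      have h1 : (⟨1, hk⟩ : Fin (m+1)) = Fin.succ ⟨0, hm⟩ := rfl
      rw [h1, traj_succ, traj_zero φ m hm]
      have h0 : (⟨0, Nat.lt_of_succ_lt hk⟩ : Fin (m+1)) = 0 := rfl
      rw [h0]
      rfl
    | succ j =>
      have hj : j + 1 < m := by omega
      have h1 : (⟨j+2, hk⟩ : Fin (m+1)) = Fin.succ ⟨j+1, hj⟩ := rfl
      have h2 : (⟨j+1, Nat.lt_of_succ_lt hk⟩ : Fin (m+1)) = Fin.succ ⟨j, Nat.lt_of_succ_lt hj⟩ := rfl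
      rw [h1, h2, traj_succ, traj_succ, ih _ _ j hj]
      rfl

lemma sum_prod_traj {S A : Type} [Fintype S] [Fintype A] (φ : S → A → S)
    (π : S → A → ℝ) (h1 : ∀ s, ∑ a, π s a = 1) :
    ∀ (n : ℕ) (s : S), ∑ a : Fin n → A, ∏ h, π (traj φ n s a h) (a h) = 1 := by
  intro n
  induction n with
  | zero => intro s; simp
  | succ m ih =>
    intro s
    have e : ∑ a : Fin (m+1) → A, ∏ h, π (traj φ (m+1) s a h) (a h)
        = ∑ p : A × (Fin m → A), π s p.1 *
            ∏ h : Fin m, π (traj φ m (φ s p.1) p.2 h) (p.2 h) := by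
      apply Fintype.sum_equiv (Fin.consEquiv (fun _ : Fin (m+1) => A)).symm
      intro a
      rw [Fin.prod_univ_succ]
      simp [Fin.consEquiv, traj, Fin.tail]
    rw [e, Fintype.sum_prod_type]
    have : ∀ x : A, ∑ b : Fin m → A, π s x *
        ∏ h : Fin m, π (traj φ m (φ s x) b h) (b h) = π s x := by
      intro x
      rw [← Finset.mul_sum, ih (φ s x), mul_one]
    simp_rw [this]
    exact h1 s

/-- **Coverability is bounded by the exponentiated density-ratio bound.**
In a deterministic contextual MDP with everywhere positive reference policy
`π_ref`, if every `π ∈ Π` satisfies `|log (π(τ)/π_ref(τ))| ≤ V_max/β` for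
every admissible trajectory `τ`, then there is a probability distribution `μ`
over trajectories with `d^π(τ) ≤ e^{V_max/β}·μ(τ)` for all `π ∈ Π` and all
trajectories `τ`; in particular `C_cov(Π) ≤ e^{V_max/β}`. -/
theorem coverability_le_exp_density_ratio {S A : Type} [Fintype S] [Fintype A]
    {H : ℕ} (hH : 0 < H)
    (layer : S → ℕ) (hlayer : ∀ s, layer s < H)
    (φ : S → A → S) (hφ : ∀ s a, layer s + 1 < H → layer (φ s a) = layer s + 1)
    (ρ : S → ℝ) (hρ0 : ∀ s, 0 ≤ ρ s) (hρ1 : ∑ s, ρ s = 1)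
    (hρsupp : ∀ s, layer s ≠ 0 → ρ s = 0)
    (piref : S → A → ℝ) (hrefpos : ∀ s a, 0 < piref s a)
    (href1 : ∀ s, ∑ a, piref s a = 1)
    (β Vmax : ℝ) (hβ : 0 < β) (hVmax : 0 ≤ Vmax)
    (Pi : Set (S → A → ℝ))
    (hPi : ∀ pol ∈ Pi, (∀ s a, 0 ≤ pol s a) ∧ ∀ s, ∑ a, pol s a = 1)
    (hratio : ∀ pol ∈ Pi, ∀ τ : Fin H → S × A,
      (∀ (h : Fin H) (hlt : (h : ℕ) + 1 < H),
        (τ ⟨(h : ℕ) + 1, hlt⟩).1 = φ (τ h).1 (τ h).2) →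
      |Real.log ((∏ h, pol (τ h).1 (τ h).2) / ∏ h, piref (τ h).1 (τ h).2)|
        ≤ Vmax / β) :
    ∃ μ : (Fin H → S × A) → ℝ, (∀ τ, 0 ≤ μ τ) ∧ (∑ τ, μ τ) = 1 ∧
      ∀ pol ∈ Pi, ∀ τ, dpi hH φ ρ pol τ ≤ Real.exp (Vmax / β) * μ τ := by
  refine ⟨dpi hH φ ρ piref, ?_, ?_, ?_⟩
  · -- nonnegativity
    intro τ
    unfold dpi
    split
    · exact mul_nonneg (hρ0 _) (Finset.prod_nonneg fun h _ => (hrefpos _ _).le)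
    · exact le_refl 0
  · -- sums to one
    set G : S × (Fin H → A) → (Fin H → S × A) :=
      fun p h => (traj φ H p.1 p.2 h, p.2 h) with hG
    have hGadm : ∀ p, ∀ (h : Fin H) (hlt : (h : ℕ) + 1 < H),
        (G p ⟨(h : ℕ) + 1, hlt⟩).1 = φ (G p h).1 (G p h).2 := by
      intro p h hlt
      have := traj_step φ H p.1 p.2 (h : ℕ) hlt
      simpa [hG, Fin.eta] using this
    have hGinj : Function.Injective G := by
      intro p q hpq
      have h2 : p.2 = q.2 := by
        funext h
        exact congrArg Prod.snd (congrFun hpq h)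
      have h1 : p.1 = q.1 := by
        have := congrArg Prod.fst (congrFun hpq ⟨0, hH⟩)
        simpa [hG, traj_zero φ H hH] using this
      exact Prod.ext h1 h2
    have hGsurj : ∀ τ : Fin H → S × A,
        (∀ (h : Fin H) (hlt : (h : ℕ) + 1 < H),
          (τ ⟨(h : ℕ) + 1, hlt⟩).1 = φ (τ h).1 (τ h).2) →
        τ = G ((τ ⟨0, hH⟩).1, fun h => (τ h).2) := by
      intro τ hadm
      have key : ∀ (k : ℕ) (hk : k < H),
          (τ ⟨k, hk⟩).1 = traj φ H (τ ⟨0, hH⟩).1 (fun h => (τ h).2) ⟨k, hk⟩ := by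
        intro k
        induction k with
        | zero => intro hk; rw [traj_zero φ H hH]
        | succ j ihj =>
          intro hk
          have hj : j < H := Nat.lt_of_succ_lt hk
          rw [traj_step φ H _ _ j hk, ← ihj hj]
          exact hadm ⟨j, hj⟩ hk
      funext h
      refine Prod.ext ?_ rfl
      have := key (h : ℕ) h.2
      simpa [Fin.eta] using this
    have himg : ∑ τ : Fin H → S × A, dpi hH φ ρ piref τ
        = ∑ τ ∈ Finset.image G Finset.univ, dpi hH φ ρ piref τ := by
      refine (Finset.sum_subset (Finset.subset_univ _) ?_).symm
      intro τ _ hτ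
      unfold dpi
      rw [if_neg]
      intro hadm
      exact hτ (Finset.mem_image.2 ⟨((τ ⟨0, hH⟩).1, fun h => (τ h).2),
        Finset.mem_univ _, (hGsurj τ hadm).symm⟩)
    rw [himg, Finset.sum_image (fun p _ q _ h => hGinj h)]
    have hval : ∀ p : S × (Fin H → A), dpi hH φ ρ piref (G p)
        = ρ p.1 * ∏ h, piref (traj φ H p.1 p.2 h) (p.2 h) := by
      intro p
      unfold dpi
      rw [if_pos (hGadm p)]
      simp [hG, traj_zero φ H hH]
    simp_rw [hval]
    rw [Fintype.sum_prod_type]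
    have : ∀ s : S, ∑ a : Fin H → A,
        ρ s * ∏ h, piref (traj φ H s a h) (a h) = ρ s := by
      intro s
      rw [← Finset.mul_sum, sum_prod_traj φ piref href1 H s, mul_one]
    simp_rw [this]
    exact hρ1
  · -- the pointwise bound
    intro pol hpol τ
    unfold dpi
    by_cases hadm : ∀ (h : Fin H) (hlt : (h : ℕ) + 1 < H),
        (τ ⟨(h : ℕ) + 1, hlt⟩).1 = φ (τ h).1 (τ h).2
    · rw [if_pos hadm, if_pos hadm]
      set P := ∏ h, pol (τ h).1 (τ h).2 with hP
      set Q := ∏ h, piref (τ h).1 (τ h).2 with hQ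
      have hQpos : 0 < Q := Finset.prod_pos fun h _ => hrefpos _ _
      have hrhs : 0 ≤ Real.exp (Vmax / β) * (ρ (τ ⟨0, hH⟩).1 * Q) :=
        mul_nonneg (Real.exp_nonneg _) (mul_nonneg (hρ0 _) hQpos.le)
      have hPnn : 0 ≤ P := Finset.prod_nonneg fun h _ => (hPi pol hpol).1 _ _
      rcases eq_or_lt_of_le hPnn with hP0 | hPpos
      · rw [← hP0, mul_zero]
        exact hrhs
      · have hlog := hratio pol hpol τ hadm
        have hlog' : Real.log (P / Q) ≤ Vmax / β := (abs_le.1 hlog).2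
        have hPQ : P / Q ≤ Real.exp (Vmax / β) := by
          rw [← Real.exp_log (div_pos hPpos hQpos)]
          exact Real.exp_le_exp.2 hlog'
        have hPle : P ≤ Real.exp (Vmax / β) * Q := by
          rw [div_le_iff₀ hQpos] at hPQ
          exact hPQ
        calc ρ (τ ⟨0, hH⟩).1 * P
            ≤ ρ (τ ⟨0, hH⟩).1 * (Real.exp (Vmax / β) * Q) :=
              mul_le_mul_of_nonneg_left hPle (hρ0 _)
          _ = Real.exp (Vmax / β) * (ρ (τ ⟨0, hH⟩).1 * Q) := by ring
    · rw [if_neg hadm, if_neg hadm, mul_zero]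


end Stmt9
end

section
/- (Burn-in mass bound for covered sequences of distributions.) Let X be a finite set, T ∈ ℕ, let d^1, …, d^T be probability distributions on X, let ν be a probability distribution on X, and let C > 0 be such that d^t(x) ≤ C·ν(x) for all t ∈ {1,…,T} and x ∈ X. For x ∈ X, say that step t is a burn-in step for x if ∑_{i=1}^{t−1} d^i(x) < C·ν(x). Then ∑_{t=1}^T ∑_{x∈X} d^t(x)·1{t is a burn-in step for x} ≤ 2C. -/
open scoped BigOperators

lemma burn_in_aux (T : ℕ) (f : ℕ → ℝ) (B : ℝ) (hB : 0 ≤ B)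
    (hf0 : ∀ t ∈ Finset.Icc 1 T, 0 ≤ f t)
    (hdom : ∀ t ∈ Finset.Icc 1 T, f t ≤ B) :
    ∀ n ≤ T,
      (∑ t ∈ Finset.Icc 1 n, f t *
          (if (∑ i ∈ Finset.Ico 1 t, f i) < B then (1 : ℝ) else 0))
        ≤ ∑ i ∈ Finset.Ico 1 (n + 1), f i ∧
      (∑ t ∈ Finset.Icc 1 n, f t *
          (if (∑ i ∈ Finset.Ico 1 t, f i) < B then (1 : ℝ) else 0))
        ≤ 2 * B := by
  intro n
  induction n with
  | zero => intro _; simp [hB]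
  | succ n ih =>
    intro hn
    have hnT : n ≤ T := Nat.le_of_succ_le hn
    obtain ⟨ih1, ih2⟩ := ih hnT
    have hmem : n + 1 ∈ Finset.Icc 1 T := Finset.mem_Icc.mpr ⟨Nat.succ_le_succ (Nat.zero_le n), hn⟩
    have hfn : 0 ≤ f (n + 1) := hf0 _ hmem
    have hfd : f (n + 1) ≤ B := hdom _ hmem
    have hsum : ∑ t ∈ Finset.Icc 1 (n + 1), f t *
          (if (∑ i ∈ Finset.Ico 1 t, f i) < B then (1 : ℝ) else 0)
        = (∑ t ∈ Finset.Icc 1 n, f t *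
          (if (∑ i ∈ Finset.Ico 1 t, f i) < B then (1 : ℝ) else 0))
          + f (n + 1) * (if (∑ i ∈ Finset.Ico 1 (n + 1), f i) < B then (1 : ℝ) else 0) :=
      Finset.sum_Icc_succ_top (Nat.succ_le_succ (Nat.zero_le n)) _
    have hIco : ∑ i ∈ Finset.Ico 1 (n + 2), f i
        = (∑ i ∈ Finset.Ico 1 (n + 1), f i) + f (n + 1) := by
      rw [Finset.sum_Ico_succ_top (Nat.succ_le_succ (Nat.zero_le n))]
    rw [hsum]
    by_cases hcase : (∑ i ∈ Finset.Ico 1 (n + 1), f i) < B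
    · simp only [hcase, if_pos, mul_one]
      constructor
      · rw [hIco]; linarith
      · linarith
    · simp only [hcase, if_neg, not_false_iff, mul_zero, add_zero]
      constructor
      · rw [hIco]; linarith
      · linarith

/-- **Burn-in mass bound for covered sequences of distributions.**
Let `X` be a finite set, `d^1, …, d^T` and `ν` probability distributions on
`X`, and `C > 0` with `d^t(x) ≤ C·ν(x)` for all `t ∈ {1,…,T}` and `x`. Calling
step `t` a *burn-in step for `x`* when `∑_{i=1}^{t-1} d^i(x) < C·ν(x)`, the
total mass placed on burn-in steps satisfies
`∑_{t=1}^T ∑_x d^t(x)·1{t burn-in for x} ≤ 2C`. -/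
theorem burn_in_mass_bound {X : Type} [Fintype X] (T : ℕ)
    (d : ℕ → X → ℝ) (ν : X → ℝ) (C : ℝ) (hC : 0 < C)
    (hd0 : ∀ t ∈ Finset.Icc 1 T, ∀ x, 0 ≤ d t x)
    (hd1 : ∀ t ∈ Finset.Icc 1 T, ∑ x, d t x = 1)
    (hν0 : ∀ x, 0 ≤ ν x) (hν1 : ∑ x, ν x = 1)
    (hdom : ∀ t ∈ Finset.Icc 1 T, ∀ x, d t x ≤ C * ν x) :
    ∑ t ∈ Finset.Icc 1 T, ∑ x, d t x *
        (if (∑ i ∈ Finset.Ico 1 t, d i x) < C * ν x then (1 : ℝ) else 0)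
      ≤ 2 * C := by
  rw [Finset.sum_comm]
  have key : ∀ x : X, (∑ t ∈ Finset.Icc 1 T, d t x *
      (if (∑ i ∈ Finset.Ico 1 t, d i x) < C * ν x then (1 : ℝ) else 0))
      ≤ 2 * (C * ν x) := by
    intro x
    exact (burn_in_aux T (fun t => d t x) (C * ν x)
      (mul_nonneg hC.le (hν0 x)) (fun t ht => hd0 t ht x)
      (fun t ht => hdom t ht x) T le_rfl).2
  calc ∑ x, ∑ t ∈ Finset.Icc 1 T, d t x *
        (if (∑ i ∈ Finset.Ico 1 t, d i x) < C * ν x then (1 : ℝ) else 0)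
      ≤ ∑ x, 2 * (C * ν x) := Finset.sum_le_sum fun x _ => key x
    _ = 2 * C := by rw [← Finset.mul_sum, ← Finset.mul_sum, hν1, mul_one]
end

section
/- (Sequential Extrapolation Coefficient is bounded by coverability.) There is an absolute constant c > 0 such that the following holds. Let X and Y be finite sets, T ∈ ℕ, let d^1, …, d^T be probability distributions on X, let k be a Markov kernel assigning to each x ∈ X a probability distribution k(·|x) on Y, let V > 0, and let δ^1, …, δ^T : X×Y → ℝ satisfy |δ^t(x,y)| ≤ 4V for all t, x, y. Suppose there exist a probability distribution ν on X and C ≥ 1 with d^t(x) ≤ C·ν(x) for all t ∈ {1,…,T} and x ∈ X. Then ∑_{t=1}^T ( ∑_{x,y} d^t(x)·k(y|x)·δ^t(x,y) )² / max( V², ∑_{i=1}^{t−1} ∑_{x,y} d^i(x)·k(y|x)·(δ^t(x,y))² ) ≤ c·C·log(T+1). -/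
open scoped BigOperators

section SecAux

private lemma sec_aux_telescope (F : ℕ → ℝ) (a b : ℕ) (h : a ≤ b) :
    ∑ t ∈ Finset.Icc a b, (F (t + 1) - F t) = F (b + 1) - F a := by
  rw [← Finset.Ico_add_one_right_eq_Icc, Finset.sum_Ico_eq_sum_range]
  have h2 : ∑ i ∈ Finset.range (b + 1 - a), (F (a + i + 1) - F (a + i))
      = F (a + (b + 1 - a)) - F (a + 0) :=
    Finset.sum_range_sub (fun i => F (a + i)) (b + 1 - a)
  have ha : a + (b + 1 - a) = b + 1 := by omega
  rw [ha, Nat.add_zero] at h2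
  exact h2

private lemma sec_aux_step_log {S dd : ℝ} (hS : 0 < S) (hd : 0 ≤ dd) (hds : dd ≤ S) :
    dd / S ≤ 2 * (Real.log (S + dd) - Real.log S) := by
  have hSd : 0 < S + dd := by linarith
  have h1 : Real.log (S / (S + dd)) ≤ S / (S + dd) - 1 :=
    Real.log_le_sub_one_of_pos (by positivity)
  have h2 : Real.log (S / (S + dd)) = Real.log S - Real.log (S + dd) :=
    Real.log_div hS.ne' hSd.ne'
  have h3 : dd / S ≤ 2 * (dd / (S + dd)) := by
    have he : 2 * (dd / (S + dd)) = (2 * dd) / (S + dd) := by ring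
    rw [he, div_le_div_iff₀ hS hSd]
    nlinarith
  have h4 : dd / (S + dd) = 1 - S / (S + dd) := by field_simp; ring
  linarith

private lemma sec_aux_burnin (T : ℕ) (dd : ℕ → ℝ) (b : ℝ) (hb : 0 ≤ b)
    (hdn : ∀ t ∈ Finset.Icc 1 T, 0 ≤ dd t) (hdb : ∀ t ∈ Finset.Icc 1 T, dd t ≤ b) :
    ∑ t ∈ Finset.Icc 1 T, (if (∑ i ∈ Finset.Ico 1 t, dd i) < b then dd t else 0)
      ≤ 2 * b := by
  rw [← Finset.sum_filter]
  set F := (Finset.Icc 1 T).filter (fun t => (∑ i ∈ Finset.Ico 1 t, dd i) < b) with hF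
  rcases F.eq_empty_or_nonempty with hFe | hFne
  · rw [hFe, Finset.sum_empty]; linarith
  · set m := F.max' hFne with hm
    have hmF : m ∈ F := F.max'_mem hFne
    have hmIcc : m ∈ Finset.Icc 1 T := (Finset.mem_filter.mp hmF).1
    have hmS : (∑ i ∈ Finset.Ico 1 m, dd i) < b := (Finset.mem_filter.mp hmF).2
    obtain ⟨hm1, hmT⟩ := Finset.mem_Icc.mp hmIcc
    have hsub : F ⊆ Finset.Icc 1 m := by
      intro t htF
      have h1 := (Finset.mem_Icc.mp (Finset.mem_filter.mp htF).1).1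
      exact Finset.mem_Icc.mpr ⟨h1, F.le_max' t htF⟩
    have h1 : ∑ t ∈ F, dd t ≤ ∑ t ∈ Finset.Icc 1 m, dd t := by
      apply Finset.sum_le_sum_of_subset_of_nonneg hsub
      intro t htm _
      obtain ⟨ht1, htm'⟩ := Finset.mem_Icc.mp htm
      exact hdn t (Finset.mem_Icc.mpr ⟨ht1, le_trans htm' hmT⟩)
    have h2 : ∑ t ∈ Finset.Icc 1 m, dd t = (∑ i ∈ Finset.Ico 1 m, dd i) + dd m := by
      rw [← Finset.Ico_add_one_right_eq_Icc, Finset.sum_Ico_succ_top hm1]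
    have h3 := hdb m hmIcc
    linarith

private lemma sec_aux_logsum (T : ℕ) (hT : 1 ≤ T) (dd : ℕ → ℝ) (b : ℝ) (hb : 0 < b)
    (hdn : ∀ t ∈ Finset.Icc 1 T, 0 ≤ dd t) (hdb : ∀ t ∈ Finset.Icc 1 T, dd t ≤ b) :
    ∑ t ∈ Finset.Icc 1 T,
        (if b ≤ ∑ i ∈ Finset.Ico 1 t, dd i then
          (dd t) ^ 2 / (∑ i ∈ Finset.Ico 1 t, dd i) else 0)
      ≤ b * (2 * Real.log ((T : ℝ) + 1)) := by
  have hlognn : 0 ≤ Real.log ((T : ℝ) + 1) := by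
    apply Real.log_nonneg
    have : (0 : ℝ) ≤ (T : ℝ) := Nat.cast_nonneg T
    linarith
  rw [← Finset.sum_filter]
  set Sf : ℕ → ℝ := fun t => ∑ i ∈ Finset.Ico 1 t, dd i with hSf
  have hmono : ∀ a c : ℕ, 1 ≤ a → a ≤ c → c ≤ T + 1 → Sf a ≤ Sf c := by
    intro a c ha hac hcT
    have hcons := Finset.sum_Ico_consecutive dd ha hac
    have hnn : 0 ≤ ∑ i ∈ Finset.Ico a c, dd i := by
      apply Finset.sum_nonneg
      intro i hi
      obtain ⟨hi1, hi2⟩ := Finset.mem_Ico.mp hi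
      exact hdn i (Finset.mem_Icc.mpr ⟨le_trans ha hi1, by omega⟩)
    simp only [hSf]
    linarith [hcons]
  set F := (Finset.Icc 1 T).filter (fun t => b ≤ Sf t) with hF
  rcases F.eq_empty_or_nonempty with hFe | hFne
  · rw [hFe, Finset.sum_empty]; positivity
  have ht₀F : F.min' hFne ∈ F := F.min'_mem hFne
  set t₀ := F.min' hFne with ht₀
  have ht₀Icc : t₀ ∈ Finset.Icc 1 T := (Finset.mem_filter.mp ht₀F).1
  have ht₀S : b ≤ Sf t₀ := (Finset.mem_filter.mp ht₀F).2
  obtain ⟨ht₀1, ht₀T⟩ := Finset.mem_Icc.mp ht₀Icc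
  have step : ∀ t ∈ F, (dd t) ^ 2 / Sf t
      ≤ b * (2 * (Real.log (Sf (t + 1)) - Real.log (Sf t))) := by
    intro t htF
    have htIcc : t ∈ Finset.Icc 1 T := (Finset.mem_filter.mp htF).1
    have htS : b ≤ Sf t := (Finset.mem_filter.mp htF).2
    obtain ⟨ht1, htT⟩ := Finset.mem_Icc.mp htIcc
    have hSpos : 0 < Sf t := lt_of_lt_of_le hb htS
    have hdt0 : 0 ≤ dd t := hdn t htIcc
    have hdtb : dd t ≤ b := hdb t htIcc
    have hsucc : Sf (t + 1) = Sf t + dd t := by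
      simp only [hSf]
      rw [Finset.sum_Ico_succ_top ht1]
    have h5 : dd t / Sf t ≤ 2 * (Real.log (Sf t + dd t) - Real.log (Sf t)) :=
      sec_aux_step_log hSpos hdt0 (le_trans hdtb htS)
    rw [hsucc]
    calc (dd t) ^ 2 / Sf t = dd t * (dd t / Sf t) := by rw [sq, mul_div_assoc]
      _ ≤ b * (dd t / Sf t) :=
          mul_le_mul_of_nonneg_right hdtb (div_nonneg hdt0 hSpos.le)
      _ ≤ b * (2 * (Real.log (Sf t + dd t) - Real.log (Sf t))) :=
          mul_le_mul_of_nonneg_left h5 hb.le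
  calc ∑ t ∈ F, (dd t) ^ 2 / Sf t
      ≤ ∑ t ∈ F, b * (2 * (Real.log (Sf (t + 1)) - Real.log (Sf t))) :=
        Finset.sum_le_sum step
    _ = b * 2 * ∑ t ∈ F, (Real.log (Sf (t + 1)) - Real.log (Sf t)) := by
        rw [Finset.mul_sum]
        exact Finset.sum_congr rfl fun t _ => by ring
    _ ≤ b * 2 * ∑ t ∈ Finset.Icc t₀ T, (Real.log (Sf (t + 1)) - Real.log (Sf t)) := by
        apply mul_le_mul_of_nonneg_left _ (by positivity : (0:ℝ) ≤ b * 2)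
        apply Finset.sum_le_sum_of_subset_of_nonneg
        · intro t htF
          exact Finset.mem_Icc.mpr ⟨F.min'_le t htF,
            (Finset.mem_Icc.mp (Finset.mem_filter.mp htF).1).2⟩
        · intro t htI _
          obtain ⟨h1, h2⟩ := Finset.mem_Icc.mp htI
          have hS1 : 0 < Sf t :=
            lt_of_lt_of_le hb (le_trans ht₀S (hmono t₀ t ht₀1 h1 (by omega)))
          have hS2 : Sf t ≤ Sf (t + 1) :=
            hmono t (t + 1) (le_trans ht₀1 h1) (Nat.le_succ t) (by omega)
          have := Real.log_le_log hS1 hS2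
          linarith
    _ = b * 2 * (Real.log (Sf (T + 1)) - Real.log (Sf t₀)) := by
        rw [sec_aux_telescope (fun u => Real.log (Sf u)) t₀ T ht₀T]
    _ ≤ b * (2 * Real.log ((T : ℝ) + 1)) := by
        have hST : Sf (T + 1) ≤ (T : ℝ) * b := by
          have he : Sf (T + 1) = ∑ i ∈ Finset.Icc 1 T, dd i := by
            simp only [hSf]
            rw [Finset.Ico_add_one_right_eq_Icc]
          rw [he]
          calc ∑ i ∈ Finset.Icc 1 T, dd i ≤ ∑ i ∈ Finset.Icc 1 T, b :=
              Finset.sum_le_sum hdb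
            _ = (T : ℝ) * b := by
                rw [Finset.sum_const, Nat.card_Icc]
                simp [nsmul_eq_mul]
        have hSt₀pos : 0 < Sf t₀ := lt_of_lt_of_le hb ht₀S
        have hSTpos : 0 < Sf (T + 1) :=
          lt_of_lt_of_le hSt₀pos (hmono t₀ (T + 1) ht₀1 (by omega) le_rfl)
        have hTcast : (0 : ℝ) ≤ (T : ℝ) := Nat.cast_nonneg T
        have h6 : Real.log (Sf (T + 1)) ≤ Real.log (((T : ℝ) + 1) * b) :=
          Real.log_le_log hSTpos (le_trans hST (by nlinarith))
        have h7 : Real.log (((T : ℝ) + 1) * b)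
            = Real.log ((T : ℝ) + 1) + Real.log b :=
          Real.log_mul (by positivity) hb.ne'
        have h8 : Real.log b ≤ Real.log (Sf t₀) := Real.log_le_log hb ht₀S
        nlinarith

end SecAux

set_option maxHeartbeats 1000000 in
/-- **The Sequential Extrapolation Coefficient is bounded by coverability**
(abstract form). There is an absolute constant `c > 0` such that for all
finite sets `X, Y`, `T ∈ ℕ`, probability distributions `d^1, …, d^T` on `X`,
Markov kernel `k` from `X` to `Y`, `V > 0`, error functions
`δ^1, …, δ^T : X × Y → ℝ` with `|δ^t(x,y)| ≤ 4V`, and a covering distribution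
`ν` on `X` with constant `C ≥ 1` (i.e. `d^t(x) ≤ C·ν(x)`), one has
`∑_{t=1}^T (E_{d^t⊗k}[δ^t])² / max(V², ∑_{i<t} E_{d^i⊗k}[(δ^t)²])
  ≤ c·C·log(T+1)`. -/
theorem sec_le_coverability :
    ∃ c : ℝ, 0 < c ∧
      ∀ (X Y : Type) [Fintype X] [Fintype Y] (T : ℕ)
        (d : ℕ → X → ℝ) (k : X → Y → ℝ) (V : ℝ) (δ : ℕ → X → Y → ℝ)
        (ν : X → ℝ) (C : ℝ),
        0 < V → 1 ≤ C →
        (∀ t ∈ Finset.Icc 1 T, ∀ x, 0 ≤ d t x) →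
        (∀ t ∈ Finset.Icc 1 T, ∑ x, d t x = 1) →
        (∀ x y, 0 ≤ k x y) → (∀ x, ∑ y, k x y = 1) →
        (∀ t ∈ Finset.Icc 1 T, ∀ x y, |δ t x y| ≤ 4 * V) →
        (∀ x, 0 ≤ ν x) → (∑ x, ν x = 1) →
        (∀ t ∈ Finset.Icc 1 T, ∀ x, d t x ≤ C * ν x) →
        ∑ t ∈ Finset.Icc 1 T,
            (∑ x, ∑ y, d t x * k x y * δ t x y) ^ 2 /
              max (V ^ 2)
                (∑ i ∈ Finset.Ico 1 t, ∑ x, ∑ y, d i x * k x y * (δ t x y) ^ 2)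
          ≤ c * C * Real.log ((T : ℝ) + 1) := by
  refine ⟨100, by norm_num, ?_⟩
  intro X Y _ _ T d k V δ ν C hV hC hd hd1 hk hk1 hδ hν hν1 hcov
  rcases Nat.eq_zero_or_pos T with hT0 | hT1
  · subst hT0
    simp
  -- abbreviations
  have hCpos : (0 : ℝ) < C := lt_of_lt_of_le one_pos hC
  -- S t x : cumulative mass before time t
  set S : ℕ → X → ℝ := fun t x => ∑ i ∈ Finset.Ico 1 t, d i x with hSdef
  set g : ℕ → X → ℝ := fun t x => ∑ y, k x y * δ t x y with hgdef
  set f : ℕ → X → ℝ := fun t x => ∑ y, k x y * (δ t x y) ^ 2 with hfdef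
  set s : ℕ → ℝ :=
    fun t => ∑ x ∈ Finset.univ.filter (fun x => S t x < C * ν x), d t x with hsdef
  set r : ℕ → ℝ :=
    fun t => ∑ x ∈ Finset.univ.filter (fun x => ¬ S t x < C * ν x),
      (d t x) ^ 2 / S t x with hrdef
  -- the key pointwise (in t) bound
  have key : ∀ t ∈ Finset.Icc 1 T,
      (∑ x, ∑ y, d t x * k x y * δ t x y) ^ 2 /
        max (V ^ 2)
          (∑ i ∈ Finset.Ico 1 t, ∑ x, ∑ y, d i x * k x y * (δ t x y) ^ 2)
      ≤ 32 * s t + 2 * r t := by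
    intro t ht
    obtain ⟨ht1, htT⟩ := Finset.mem_Icc.mp ht
    have hdt : ∀ x, 0 ≤ d t x := hd t ht
    have hSnn : ∀ x, 0 ≤ S t x := by
      intro x
      apply Finset.sum_nonneg
      intro i hi
      obtain ⟨hi1, hi2⟩ := Finset.mem_Ico.mp hi
      exact hd i (Finset.mem_Icc.mpr ⟨hi1, by omega⟩) x
    have hfnn : ∀ x, 0 ≤ f t x := by
      intro x
      apply Finset.sum_nonneg
      intro y _
      exact mul_nonneg (hk x y) (sq_nonneg _)
    have hgb : ∀ x, |g t x| ≤ 4 * V := by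
      intro x
      calc |g t x| ≤ ∑ y, |k x y * δ t x y| := Finset.abs_sum_le_sum_abs _ _
        _ ≤ ∑ y, k x y * (4 * V) := by
            apply Finset.sum_le_sum
            intro y _
            rw [abs_mul, abs_of_nonneg (hk x y)]
            exact mul_le_mul_of_nonneg_left (hδ t ht x y) (hk x y)
        _ = 4 * V := by rw [← Finset.sum_mul, hk1 x, one_mul]
    have hgf : ∀ x, (g t x) ^ 2 ≤ f t x := by
      intro x
      have hcs := Finset.sum_mul_sq_le_sq_mul_sq Finset.univ
        (fun y => Real.sqrt (k x y)) (fun y => Real.sqrt (k x y) * δ t x y)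
      have h1 : ∀ y, Real.sqrt (k x y) * (Real.sqrt (k x y) * δ t x y)
          = k x y * δ t x y := by
        intro y
        rw [← mul_assoc, Real.mul_self_sqrt (hk x y)]
      have h2 : ∀ y, Real.sqrt (k x y) ^ 2 = k x y := fun y => Real.sq_sqrt (hk x y)
      have h3 : ∀ y, (Real.sqrt (k x y) * δ t x y) ^ 2 = k x y * (δ t x y) ^ 2 := by
        intro y
        rw [mul_pow, h2 y]
      calc (g t x) ^ 2
          = (∑ y, Real.sqrt (k x y) * (Real.sqrt (k x y) * δ t x y)) ^ 2 := by
            simp only [hgdef]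
            congr 1
            exact (Finset.sum_congr rfl fun y _ => h1 y).symm
        _ ≤ (∑ y, Real.sqrt (k x y) ^ 2) * ∑ y, (Real.sqrt (k x y) * δ t x y) ^ 2 :=
            hcs
        _ = (∑ y, k x y) * ∑ y, k x y * (δ t x y) ^ 2 := by
            rw [Finset.sum_congr rfl fun y _ => h2 y,
              Finset.sum_congr rfl fun y _ => h3 y]
        _ = f t x := by rw [hk1 x, one_mul]
    -- rewrite numerator and denominator
    have hnum : (∑ x, ∑ y, d t x * k x y * δ t x y) = ∑ x, d t x * g t x := by
      apply Finset.sum_congr rfl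
      intro x _
      simp only [hgdef]
      rw [Finset.mul_sum]
      exact Finset.sum_congr rfl fun y _ => by ring
    have hden : (∑ i ∈ Finset.Ico 1 t, ∑ x, ∑ y, d i x * k x y * (δ t x y) ^ 2)
        = ∑ x, S t x * f t x := by
      rw [Finset.sum_comm]
      apply Finset.sum_congr rfl
      intro x _
      simp only [hSdef, hfdef]
      rw [Finset.sum_mul]
      apply Finset.sum_congr rfl
      intro i _
      rw [Finset.mul_sum]
      exact Finset.sum_congr rfl fun y _ => by ring
    rw [hnum, hden]
    set D2 := ∑ x, S t x * f t x with hD2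
    set D := max (V ^ 2) D2 with hD
    have hD2nn : 0 ≤ D2 := Finset.sum_nonneg fun x _ => mul_nonneg (hSnn x) (hfnn x)
    have hVD : V ^ 2 ≤ D := le_max_left _ _
    have hD2D : D2 ≤ D := le_max_right _ _
    have hDpos : 0 < D := lt_of_lt_of_le (pow_pos hV 2) hVD
    set B := ∑ x ∈ Finset.univ.filter (fun x => S t x < C * ν x), d t x * g t x
      with hB
    set M := ∑ x ∈ Finset.univ.filter (fun x => ¬ S t x < C * ν x), d t x * g t x
      with hM
    have hsplit : ∑ x, d t x * g t x = B + M :=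
      (Finset.sum_filter_add_sum_filter_not _ _ _).symm
    have hsnn : 0 ≤ s t := Finset.sum_nonneg fun x _ => hdt x
    have hrnn : 0 ≤ r t :=
      Finset.sum_nonneg fun x _ => div_nonneg (sq_nonneg _) (hSnn x)
    have hs1 : s t ≤ 1 := by
      rw [← hd1 t ht]
      exact Finset.sum_le_sum_of_subset_of_nonneg (Finset.filter_subset _ _)
        fun x _ _ => hdt x
    have hBabs : |B| ≤ 4 * V * s t := by
      calc |B| ≤ ∑ x ∈ Finset.univ.filter (fun x => S t x < C * ν x),
            |d t x * g t x| := Finset.abs_sum_le_sum_abs _ _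
        _ ≤ ∑ x ∈ Finset.univ.filter (fun x => S t x < C * ν x),
            d t x * (4 * V) := by
            apply Finset.sum_le_sum
            intro x _
            rw [abs_mul, abs_of_nonneg (hdt x)]
            exact mul_le_mul_of_nonneg_left (hgb x) (hdt x)
        _ = 4 * V * s t := by
            simp only [hsdef]
            rw [← Finset.sum_mul]
            ring
    have hM2 : M ^ 2 ≤ r t * D2 := by
      have hMeq : M = ∑ x ∈ Finset.univ.filter (fun x => ¬ S t x < C * ν x),
          (d t x / Real.sqrt (S t x)) * (Real.sqrt (S t x) * g t x) := by
        apply Finset.sum_congr rfl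
        intro x hx
        rcases eq_or_lt_of_le (hSnn x) with h0 | hpos
        · have hx' : ¬ S t x < C * ν x := (Finset.mem_filter.mp hx).2
          push_neg at hx'
          have hν0 : ν x = 0 := by
            have h1 : C * ν x ≤ 0 := by rw [← h0] at hx'; exact hx'
            have := hν x
            nlinarith
          have hd0 : d t x = 0 := by
            have := hcov t ht x
            rw [hν0] at this
            have := hdt x
            linarith [hcov t ht x]
          simp [hd0]
        · have hs0 : Real.sqrt (S t x) ≠ 0 := ne_of_gt (Real.sqrt_pos.mpr hpos)
          field_simp
      have hcs := Finset.sum_mul_sq_le_sq_mul_sq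
        (Finset.univ.filter (fun x => ¬ S t x < C * ν x))
        (fun x => d t x / Real.sqrt (S t x)) (fun x => Real.sqrt (S t x) * g t x)
      have hr : ∑ x ∈ Finset.univ.filter (fun x => ¬ S t x < C * ν x),
          (d t x / Real.sqrt (S t x)) ^ 2 = r t := by
        apply Finset.sum_congr rfl
        intro x _
        rw [div_pow, Real.sq_sqrt (hSnn x)]
      have hq : ∑ x ∈ Finset.univ.filter (fun x => ¬ S t x < C * ν x),
          (Real.sqrt (S t x) * g t x) ^ 2 ≤ D2 := by
        calc ∑ x ∈ Finset.univ.filter (fun x => ¬ S t x < C * ν x),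
              (Real.sqrt (S t x) * g t x) ^ 2
            = ∑ x ∈ Finset.univ.filter (fun x => ¬ S t x < C * ν x),
              S t x * (g t x) ^ 2 := by
              apply Finset.sum_congr rfl
              intro x _
              rw [mul_pow, Real.sq_sqrt (hSnn x)]
          _ ≤ ∑ x ∈ Finset.univ.filter (fun x => ¬ S t x < C * ν x),
              S t x * f t x := by
              apply Finset.sum_le_sum
              intro x _
              exact mul_le_mul_of_nonneg_left (hgf x) (hSnn x)
          _ ≤ D2 :=
              Finset.sum_le_sum_of_subset_of_nonneg (Finset.filter_subset _ _)
                fun x _ _ => mul_nonneg (hSnn x) (hfnn x)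
      calc M ^ 2 = (∑ x ∈ Finset.univ.filter (fun x => ¬ S t x < C * ν x),
            (d t x / Real.sqrt (S t x)) * (Real.sqrt (S t x) * g t x)) ^ 2 := by
            rw [← hMeq]
        _ ≤ (∑ x ∈ Finset.univ.filter (fun x => ¬ S t x < C * ν x),
              (d t x / Real.sqrt (S t x)) ^ 2) *
            ∑ x ∈ Finset.univ.filter (fun x => ¬ S t x < C * ν x),
              (Real.sqrt (S t x) * g t x) ^ 2 := hcs
        _ ≤ r t * D2 := by
            rw [hr]
            exact mul_le_mul_of_nonneg_left hq hrnn
    rw [hsplit, div_le_iff₀ hDpos]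
    clear_value B M D2 D
    have hB2 : B ^ 2 ≤ 16 * V ^ 2 * (s t) ^ 2 := by
      have h0 : |B| ^ 2 ≤ (4 * V * s t) ^ 2 :=
        pow_le_pow_left₀ (abs_nonneg B) hBabs 2
      rw [sq_abs] at h0
      nlinarith
    have hh1 : (B + M) ^ 2 ≤ 2 * B ^ 2 + 2 * M ^ 2 := by nlinarith [sq_nonneg (B - M)]
    have hh2 : 2 * B ^ 2 ≤ 32 * V ^ 2 * s t := by
      nlinarith [hB2, mul_nonneg (mul_nonneg hsnn (sub_nonneg.mpr hs1)) (sq_nonneg V)]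
    have hh3 : 32 * V ^ 2 * s t ≤ 32 * s t * D := by
      nlinarith [mul_nonneg hsnn (sub_nonneg.mpr hVD)]
    have hh4 : 2 * M ^ 2 ≤ 2 * r t * D := by
      nlinarith [hM2, mul_nonneg hrnn (sub_nonneg.mpr hD2D)]
    have hh5 : (32 * s t + 2 * r t) * D = 32 * s t * D + 2 * r t * D := by ring
    linarith
  -- sum the bounds
  have sum_s : ∑ t ∈ Finset.Icc 1 T, s t ≤ 2 * C := by
    have hrw : ∀ t ∈ Finset.Icc 1 T,
        s t = ∑ x, (if S t x < C * ν x then d t x else 0) := by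
      intro t _
      simp only [hsdef]
      rw [Finset.sum_filter]
    calc ∑ t ∈ Finset.Icc 1 T, s t
        = ∑ t ∈ Finset.Icc 1 T, ∑ x, (if S t x < C * ν x then d t x else 0) :=
          Finset.sum_congr rfl hrw
      _ = ∑ x, ∑ t ∈ Finset.Icc 1 T, (if S t x < C * ν x then d t x else 0) :=
          Finset.sum_comm
      _ ≤ ∑ x : X, 2 * (C * ν x) := by
          apply Finset.sum_le_sum
          intro x _
          exact sec_aux_burnin T (fun i => d i x) (C * ν x)
            (mul_nonneg hCpos.le (hν x)) (fun u hu => hd u hu x)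
            (fun u hu => hcov u hu x)
      _ = 2 * C := by
          rw [← Finset.mul_sum]
          rw [show (∑ x, C * ν x) = C * ∑ x, ν x from (Finset.mul_sum _ _ _).symm]
          rw [hν1]
          ring
  have sum_r : ∑ t ∈ Finset.Icc 1 T, r t ≤ 2 * C * Real.log ((T : ℝ) + 1) := by
    have hrw : ∀ t ∈ Finset.Icc 1 T,
        r t = ∑ x, (if C * ν x ≤ S t x then (d t x) ^ 2 / S t x else 0) := by
      intro t _
      simp only [hrdef]
      rw [Finset.sum_filter]
      apply Finset.sum_congr rfl
      intro x _
      by_cases h : S t x < C * ν x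
      · simp [h, not_lt.mpr, h.not_ge]
      · simp [h, not_lt.mp h]
    calc ∑ t ∈ Finset.Icc 1 T, r t
        = ∑ t ∈ Finset.Icc 1 T, ∑ x,
            (if C * ν x ≤ S t x then (d t x) ^ 2 / S t x else 0) :=
          Finset.sum_congr rfl hrw
      _ = ∑ x, ∑ t ∈ Finset.Icc 1 T,
            (if C * ν x ≤ S t x then (d t x) ^ 2 / S t x else 0) :=
          Finset.sum_comm
      _ ≤ ∑ x : X, C * ν x * (2 * Real.log ((T : ℝ) + 1)) := by
          apply Finset.sum_le_sum
          intro x _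
          by_cases hb : 0 < C * ν x
          · exact sec_aux_logsum T hT1 (fun i => d i x) (C * ν x) hb
              (fun u hu => hd u hu x) (fun u hu => hcov u hu x)
          · push_neg at hb
            have hν0 : ν x = 0 := by
              have := hν x
              nlinarith
            have hz : ∑ t ∈ Finset.Icc 1 T,
                (if C * ν x ≤ S t x then (d t x) ^ 2 / S t x else 0) = 0 := by
              apply Finset.sum_eq_zero
              intro u hu
              have hd0 : d u x = 0 := by
                have h1 := hcov u hu x
                rw [hν0] at h1
                have h2 := hd u hu x
                linarith [hcov u hu x]
              rw [hd0]
              simp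
            rw [hz, hν0]
            simp
      _ = 2 * C * Real.log ((T : ℝ) + 1) := by
          rw [← Finset.sum_mul,
            show (∑ x, C * ν x) = C * ∑ x, ν x from (Finset.mul_sum _ _ _).symm,
            hν1]
          ring
  have hlog2 : Real.log 2 ≤ Real.log ((T : ℝ) + 1) := by
    apply Real.log_le_log (by norm_num)
    have : (1 : ℝ) ≤ (T : ℝ) := by exact_mod_cast hT1
    linarith
  have hlog2' : (0.6931471803 : ℝ) < Real.log 2 := Real.log_two_gt_d9
  calc ∑ t ∈ Finset.Icc 1 T,
        (∑ x, ∑ y, d t x * k x y * δ t x y) ^ 2 /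
          max (V ^ 2)
            (∑ i ∈ Finset.Ico 1 t, ∑ x, ∑ y, d i x * k x y * (δ t x y) ^ 2)
      ≤ ∑ t ∈ Finset.Icc 1 T, (32 * s t + 2 * r t) := Finset.sum_le_sum key
    _ = 32 * ∑ t ∈ Finset.Icc 1 T, s t + 2 * ∑ t ∈ Finset.Icc 1 T, r t := by
        rw [Finset.sum_add_distrib, Finset.mul_sum, Finset.mul_sum]
    _ ≤ 32 * (2 * C) + 2 * (2 * C * Real.log ((T : ℝ) + 1)) := by
        have h32 : 32 * ∑ t ∈ Finset.Icc 1 T, s t ≤ 32 * (2 * C) := by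
          linarith [sum_s]
        have h2r : 2 * ∑ t ∈ Finset.Icc 1 T, r t
            ≤ 2 * (2 * C * Real.log ((T : ℝ) + 1)) := by
          linarith [sum_r]
        linarith
    _ ≤ 100 * C * Real.log ((T : ℝ) + 1) := by nlinarith
end
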